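/- arXiv:2107.07792 — 4 statements merged into one kernel-verified Lean document; each statement's English description precedes it below -/
import Mathlib

section
/- Let P, Q : [0,1] → R be one-dimensional curves with d_F(P, Q) ≤ δ, let P' be a δ-signature of P, and let Q' be a 2δ-signature of Q. Then d_F(P', Q') ≤ 3δ. -/
/-- Continuous Fréchet distance between curves on the unit interval. -/
noncomputable def frechetDist {E : Type*} [PseudoMetricSpace E] (P Q : unitInterval → E) : ℝ :=
  sInf {r : ℝ | ∃ f g : unitInterval → unitInterval,
    Continuous f ∧ Monotone f ∧ Function.Surjective f ∧
    Continuous g ∧ Monotone g ∧ Function.Surjective g ∧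
    ∀ t, dist (P (f t)) (Q (g t)) ≤ r}

/-- The directed line segment from `a` to `b`, parametrized linearly. -/
noncomputable def segCurve {E : Type*} [AddCommGroup E] [Module ℝ E] (a b : E) :
    unitInterval → E :=
  fun t => (1 - (t : ℝ)) • a + (t : ℝ) • b

/-- The polygonal curve with `n+1` vertices `p 0, …, p n`, parametrized uniformly. -/
noncomputable def polyCurve {E : Type*} [AddCommGroup E] [Module ℝ E]
    (n : ℕ) (p : Fin (n + 1) → E) (t : unitInterval) : E :=
  let x : ℝ := (t : ℝ) * n
  let i : ℕ := min (Nat.floor x) (n - 1)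
  (1 - (x - (i : ℝ))) • p ⟨min i n, Nat.lt_succ_of_le (min_le_right i n)⟩ +
    (x - (i : ℝ)) • p ⟨min (i + 1) n, Nat.lt_succ_of_le (min_le_right (i + 1) n)⟩

/-- The subcurve `Q[a,b]`, linearly reparametrized over the unit interval. -/
noncomputable def subcurve {E : Type*} (Q : unitInterval → E) (a b : unitInterval) :
    unitInterval → E :=
  fun s => Q ⟨(1 - (s : ℝ)) * (a : ℝ) + (s : ℝ) * (b : ℝ), Set.mem_Icc.mpr ⟨by
      have hs0 := unitInterval.nonneg s; have hs1 := unitInterval.le_one s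
      have ha0 := unitInterval.nonneg a; have hb0 := unitInterval.nonneg b
      have h1 : (0:ℝ) ≤ (1 - (s:ℝ)) * (a:ℝ) := mul_nonneg (by linarith) ha0
      have h2 : (0:ℝ) ≤ (s:ℝ) * (b:ℝ) := mul_nonneg hs0 hb0
      linarith, by
      have hs0 := unitInterval.nonneg s; have hs1 := unitInterval.le_one s
      have ha1 := unitInterval.le_one a; have hb1 := unitInterval.le_one b
      have h1 : (1 - (s:ℝ)) * (a:ℝ) ≤ (1 - (s:ℝ)) * 1 :=
        mul_le_mul_of_nonneg_left ha1 (by linarith)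
      have h2 : (s:ℝ) * (b:ℝ) ≤ (s:ℝ) * 1 := mul_le_mul_of_nonneg_left hb1 hs0
      linarith⟩⟩

/-- The parameter (in the uniform parametrization) of the `i`-th vertex of a
polygonal curve with `n` edges. -/
noncomputable def vparam (n : ℕ) (i : Fin (n + 1)) : unitInterval :=
  ⟨((i : ℕ) : ℝ) / (n : ℝ), Set.mem_Icc.mpr ⟨by positivity, by
    have h1 : ((i : ℕ) : ℝ) ≤ (n : ℝ) := by exact_mod_cast Nat.lt_succ_iff.mp i.isLt
    rcases Nat.eq_zero_or_pos n with h | h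
    · subst h; simp
    · rw [div_le_one (by exact_mod_cast h)]; exact h1⟩⟩

/-- `P` is `c`-monotone increasing. -/
def ApproxInc (c : ℝ) (P : unitInterval → ℝ) : Prop :=
  ∀ s t : unitInterval, s ≤ t → P s - c ≤ P t

/-- `P` is `c`-monotone decreasing. -/
def ApproxDec (c : ℝ) (P : unitInterval → ℝ) : Prop :=
  ∀ s t : unitInterval, s ≤ t → P t ≤ P s + c

/-- `P` is `c`-monotone. -/
def ApproxMono (c : ℝ) (P : unitInterval → ℝ) : Prop :=
  ApproxInc c P ∨ ApproxDec c P

/-- Concatenation of two curves (first on `[0,1/2]`, second on `[1/2,1]`). -/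
noncomputable def concatC {E : Type*} (P Q : unitInterval → E) : unitInterval → E :=
  fun t =>
    if h : (t : ℝ) ≤ 1 / 2 then
      P ⟨2 * (t : ℝ), Set.mem_Icc.mpr ⟨by have := unitInterval.nonneg t; linarith,
        by linarith⟩⟩
    else
      Q ⟨2 * (t : ℝ) - 1, Set.mem_Icc.mpr ⟨by push_neg at h; linarith,
        by have := unitInterval.le_one t; linarith⟩⟩

/-- The data of a `δ`-straightening of the curve `Q`: parameters
`0 = t 0 < … < t (Fin.last ℓ) = 1` such that each shortcut segment is within
Fréchet distance `δ` of the corresponding subcurve (locality), and each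
corresponding subcurve stays in the closed interval spanned by the shortcut's
endpoints (edge-range-preserving). -/
def StraighteningData (δ : ℝ) (Q : unitInterval → ℝ) (ℓ : ℕ)
    (t : Fin (ℓ + 1) → unitInterval) : Prop :=
  StrictMono t ∧ t 0 = 0 ∧ t (Fin.last ℓ) = 1 ∧
    ∀ i : Fin ℓ,
      frechetDist (segCurve (Q (t i.castSucc)) (Q (t i.succ)))
          (subcurve Q (t i.castSucc) (t i.succ)) ≤ δ ∧
      ∀ s : unitInterval, t i.castSucc ≤ s → s ≤ t i.succ →
        Q s ∈ Set.uIcc (Q (t i.castSucc)) (Q (t i.succ))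

/-- `Q'` is a `δ`-straightening of `Q`. -/
def IsStraightening (δ : ℝ) (Q Q' : unitInterval → ℝ) : Prop :=
  ∃ (ℓ : ℕ) (t : Fin (ℓ + 1) → unitInterval),
    StraighteningData δ Q ℓ t ∧ Q' = polyCurve ℓ (fun i => Q (t i))

/-- The data of a `δ`-signature of the curve `Q`: parameters
`0 = t 0 < … < t (Fin.last ℓ) = 1` with the locality property, non-degenerate
vertex-range-preserving interior vertices, and the `δ`-edge-length property. -/
def SignatureData (δ : ℝ) (Q : unitInterval → ℝ) (ℓ : ℕ)
    (t : Fin (ℓ + 1) → unitInterval) : Prop :=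
  StrictMono t ∧ t 0 = 0 ∧ t (Fin.last ℓ) = 1 ∧
    (∀ i : Fin ℓ,
      frechetDist (segCurve (Q (t i.castSucc)) (Q (t i.succ)))
          (subcurve Q (t i.castSucc) (t i.succ)) ≤ δ) ∧
    (∀ i : ℕ, ∀ _h1 : 0 < i, ∀ _h2 : i < ℓ,
      (Q (t ⟨i - 1, by omega⟩) < Q (t ⟨i, by omega⟩) ∧
        Q (t ⟨i + 1, by omega⟩) < Q (t ⟨i, by omega⟩) ∧
        ∀ s : unitInterval, t ⟨i - 1, by omega⟩ ≤ s → s ≤ t ⟨i + 1, by omega⟩ →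
          Q s ≤ Q (t ⟨i, by omega⟩)) ∨
      (Q (t ⟨i, by omega⟩) < Q (t ⟨i - 1, by omega⟩) ∧
        Q (t ⟨i, by omega⟩) < Q (t ⟨i + 1, by omega⟩) ∧
        ∀ s : unitInterval, t ⟨i - 1, by omega⟩ ≤ s → s ≤ t ⟨i + 1, by omega⟩ →
          Q (t ⟨i, by omega⟩) ≤ Q s)) ∧
    (∀ _h : 1 ≤ ℓ,
      δ < |Q (t ⟨1, by omega⟩) - Q (t 0)| ∧
      δ < |Q (t (Fin.last ℓ)) - Q (t ⟨ℓ - 1, by omega⟩)|) ∧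
    (∀ j : ℕ, ∀ _hj1 : 1 ≤ j, ∀ _hj2 : j + 2 ≤ ℓ,
      2 * δ < |Q (t ⟨j + 1, by omega⟩) - Q (t ⟨j, by omega⟩)|)

/-- `Q'` is a `δ`-signature of `Q`. -/
def IsSignature (δ : ℝ) (Q Q' : unitInterval → ℝ) : Prop :=
  ∃ (ℓ : ℕ) (t : Fin (ℓ + 1) → unitInterval),
    SignatureData δ Q ℓ t ∧ Q' = polyCurve ℓ (fun i => Q (t i))

/-- Vertex `j` of the polygonal curve on `q` `δ`-visits vertex `a` of the
polygonal curve on `p` under the monotone traversal `(f, g)`: they are within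
distance `δ`, and the traversal matches one of them to the other vertex or to the
interior of an edge incident to it. -/
def Visits (δ : ℝ) (m k : ℕ) (p : Fin (m + 1) → ℝ) (q : Fin (k + 1) → ℝ)
    (f g : unitInterval → unitInterval) (j : Fin (k + 1)) (a : Fin (m + 1)) : Prop :=
  |q j - p a| ≤ δ ∧
    ((∃ t : unitInterval, g t = vparam k j ∧ |(f t : ℝ) * (m : ℝ) - ((a : ℕ) : ℝ)| < 1) ∨
     (∃ t : unitInterval, f t = vparam m a ∧ |(g t : ℝ) * (k : ℝ) - ((j : ℕ) : ℝ)| < 1))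

/-!
By locality, each signature is the image of its curve under a monotone map that sends the chosen
vertices to the vertices of the polygon and moves points by at most `δ` (resp. `2δ`), up to an
arbitrarily small error.  Sampling a near-optimal matching of `P` and `Q` at the times it passes a
vertex of `P'` or of `Q'` yields finitely many matched pairs of points of `P'` and `Q'` at distance
at most `3δ`, and interpolating linearly between consecutive pairs is a matching of the polygons.
-/

open Set Function unitInterval

section PolyCurve

variable {E : Type*} [AddCommGroup E] [Module ℝ E] {n : ℕ}

lemma polyCurve_zero (p : Fin 1 → E) (x : I) : polyCurve 0 p x = p 0 := by
  simp [polyCurve]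

lemma coe_vparam (i : Fin (n + 1)) : (vparam n i : ℝ) = i / n := rfl

lemma polyCurve_edge (p : Fin (n + 1) → E) (a : Fin n) {x : I}
    (h₁ : (a : ℝ) ≤ x * n) (h₂ : (x : ℝ) * n ≤ a + 1) :
    polyCurve n p x = (1 - ((x : ℝ) * n - a)) • p a.castSucc + ((x : ℝ) * n - a) • p a.succ := by
  set i := min ⌊(x : ℝ) * n⌋₊ (n - 1) with hi
  have hfloor : a ≤ ⌊(x : ℝ) * n⌋₊ ∧ ⌊(x : ℝ) * n⌋₊ ≤ a + 1 :=
    ⟨Nat.le_floor h₁, Nat.floor_le_of_le (by exact_mod_cast h₂)⟩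
  have hcases : i = a ∨ (i = a + 1 ∧ (x : ℝ) * n = a + 1) := by
    rcases Nat.lt_or_ge ⌊(x : ℝ) * n⌋₊ (a + 1) with h | h
    · left; omega
    · by_cases hn : a + 1 ≤ n - 1
      · right
        refine ⟨by omega, le_antisymm h₂ ?_⟩
        exact_mod_cast (Nat.le_floor_iff (mul_nonneg x.2.1 n.cast_nonneg)).mp h
      · left; omega
  have hval : polyCurve n p x = (1 - ((x : ℝ) * n - i)) • p ⟨min i n, by omega⟩
      + ((x : ℝ) * n - i) • p ⟨min (i + 1) n, by omega⟩ := rfl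
  rcases hcases with h | ⟨h, hx⟩
  · rw [hval]
    simp only [h]
    congr 3 <;> ext <;> simp
  · rw [hval]
    simp only [h, hx]
    push_cast
    simp [Fin.succ]

lemma exists_edge_of_lt_one (hn : 1 ≤ n) {x : I} (hx : x < 1) :
    ∃ a : Fin n, (a : ℝ) ≤ x * n ∧ (x : ℝ) * n < a + 1 := by
  have hX : (x : ℝ) * n < n := by
    have : (x : ℝ) < 1 := hx
    nlinarith [show (1 : ℝ) ≤ n by exact_mod_cast hn]
  have hX0 : 0 ≤ (x : ℝ) * n := mul_nonneg x.2.1 n.cast_nonneg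
  refine ⟨⟨⌊(x : ℝ) * n⌋₊, (Nat.floor_lt hX0).mpr hX⟩, Nat.floor_le hX0, Nat.lt_floor_add_one _⟩

lemma exists_edge (hn : 1 ≤ n) (x : I) : ∃ a : Fin n, (a : ℝ) ≤ x * n ∧ (x : ℝ) * n ≤ a + 1 := by
  rcases lt_or_eq_of_le (le_one' : x ≤ 1) with hx | rfl
  · obtain ⟨a, h₁, h₂⟩ := exists_edge_of_lt_one hn hx
    exact ⟨a, h₁, h₂.le⟩
  · obtain ⟨k, rfl⟩ : ∃ k, n = k + 1 := ⟨n - 1, by omega⟩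
    exact ⟨Fin.last k, by simp, by simp⟩

lemma polyCurve_mem_edge (hn : 1 ≤ n) (x : I) :
    ∃ a : Fin n, ∃ μ ∈ Icc (0 : ℝ) 1,
      ∀ p : Fin (n + 1) → E, polyCurve n p x = (1 - μ) • p a.castSucc + μ • p a.succ := by
  obtain ⟨a, h₁, h₂⟩ := exists_edge hn x
  exact ⟨a, _, ⟨by linarith, by linarith⟩, fun p => polyCurve_edge p a h₁ h₂⟩

lemma polyCurve_vparam (p : Fin (n + 1) → E) (i : Fin (n + 1)) :
    polyCurve n p (vparam n i) = p i := by
  rcases Nat.eq_zero_or_pos n with rfl | hn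
  · rw [polyCurve_zero, Fin.fin_one_eq_zero i]
  obtain ⟨k, rfl⟩ : ∃ k, n = k + 1 := ⟨n - 1, by omega⟩
  have hi : ∀ i : Fin (k + 2), (vparam (k + 1) i : ℝ) * (k + 1 : ℕ) = i := fun i => by
    rw [coe_vparam]; field_simp
  push_cast at hi
  induction i using Fin.lastCases with
  | last => rw [polyCurve_edge p (Fin.last k) (by simp [hi]) (by simp [hi])]; simp [hi]
  | cast a => rw [polyCurve_edge p a (by simp [hi]) (by simp [hi])]; simp [hi]

lemma polyCurve_affine_of_vparam_notMem (hn : 1 ≤ n) (p : Fin (n + 1) → E) {x y w : I}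
    (hxy : x ≤ y) (hvert : ∀ a, vparam n a ∉ Ioo x y) {μ : ℝ} (hμ : μ ∈ Icc (0 : ℝ) 1)
    (hw : (w : ℝ) = (1 - μ) * x + μ * y) :
    polyCurve n p w = (1 - μ) • polyCurve n p x + μ • polyCurve n p y := by
  rcases lt_or_eq_of_le (le_one' : x ≤ 1) with hx | rfl
  · obtain ⟨a, hxa, hxa'⟩ := exists_edge_of_lt_one hn hx
    have hn' : (0 : ℝ) < n := by exact_mod_cast hn
    have hya : (y : ℝ) * n ≤ a + 1 := by
      by_contra! h
      refine hvert a.succ ⟨?_, ?_⟩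
      · change (x : ℝ) < (a.succ : ℕ) / n
        rw [lt_div_iff₀ hn']; simpa using hxa'
      · change ((a.succ : ℕ) : ℝ) / n < y
        rw [div_lt_iff₀ hn']; simpa using h
    have hwn : (w : ℝ) * n = (1 - μ) * (x * n) + μ * (y * n) := by rw [hw]; ring
    have hxn : (x : ℝ) * n ≤ y * n := by gcongr
    have h₁ := mul_nonneg (sub_nonneg.2 hμ.2) (sub_nonneg.2 hxa)
    have h₂ := mul_nonneg hμ.1 (sub_nonneg.2 (hxa.trans hxn))
    have h₃ := mul_nonneg (sub_nonneg.2 hμ.2) (sub_nonneg.2 (hxn.trans hya))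
    have h₄ := mul_nonneg hμ.1 (sub_nonneg.2 hya)
    rw [polyCurve_edge p a hxa hxa'.le, polyCurve_edge p a (hxa.trans hxn) hya,
      polyCurve_edge p a (by nlinarith) (by nlinarith), hwn]
    module
  · obtain rfl : y = 1 := le_antisymm le_one' hxy
    obtain rfl : w = 1 := Subtype.ext (by simp [hw])
    module

lemma polyCurve_continuous [TopologicalSpace E] [IsTopologicalAddGroup E] [ContinuousSMul ℝ E]
    (p : Fin (n + 1) → E) : Continuous (polyCurve n p) := by
  rcases Nat.eq_zero_or_pos n with rfl | hn
  · simpa [funext (polyCurve_zero p)] using continuous_const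
  let edge (a : Fin n) : Set I := {x | (a : ℝ) ≤ x * n ∧ (x : ℝ) * n ≤ a + 1}
  refine (locallyFinite_of_finite edge).continuous ?_ (fun a => ?_) (fun a => ?_)
  · exact eq_univ_of_forall fun x => mem_iUnion.2 (exists_edge hn x)
  · have : Continuous fun x : I => (x : ℝ) * n := by fun_prop
    exact (isClosed_le continuous_const this).inter (isClosed_le this continuous_const)
  · exact (Continuous.continuousOn (by fun_prop)).congr fun x hx =>
      polyCurve_edge p a hx.1 hx.2

end PolyCurve

lemma polyCurve_monotone {n : ℕ} {p : Fin (n + 1) → ℝ} (hp : Monotone p) :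
    Monotone (polyCurve n p) := by
  rcases Nat.eq_zero_or_pos n with rfl | hn
  · intro x y _; simp [polyCurve_zero]
  intro x y hxy
  have hxn : (x : ℝ) * n ≤ y * n := by gcongr
  obtain ⟨a, hxa, hxa'⟩ := exists_edge hn x
  obtain ⟨b, hyb, hyb'⟩ := exists_edge hn y
  rcases lt_or_ge b a with hba | hab
  · have : (b : ℝ) + 1 ≤ a := by exact_mod_cast hba
    have hn' : (0 : ℝ) < n := by exact_mod_cast hn
    obtain rfl : x = y := Subtype.ext (mul_right_cancel₀ hn'.ne' (by linarith))
    rfl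
  rw [polyCurve_edge p a hxa hxa', polyCurve_edge p b hyb hyb', smul_eq_mul, smul_eq_mul,
    smul_eq_mul, smul_eq_mul]
  have hpa := hp a.castSucc_le_succ
  rcases hab.lt_or_eq with hab | rfl
  · have hpab : p a.succ ≤ p b.castSucc := hp (Fin.succ_le_castSucc_iff.2 hab)
    have hpb := hp b.castSucc_le_succ
    nlinarith
  · nlinarith

def IsReparam (f : I → I) : Prop :=
  Continuous f ∧ Monotone f ∧ Surjective f

lemma IsReparam.map_zero {f : I → I} (hf : IsReparam f) : f 0 = 0 := by
  obtain ⟨x, hx⟩ := hf.2.2 0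
  exact le_antisymm ((hf.2.1 (nonneg' (t := x))).trans_eq hx) nonneg'

lemma IsReparam.map_one {f : I → I} (hf : IsReparam f) : f 1 = 1 := by
  obtain ⟨x, hx⟩ := hf.2.2 1
  exact le_antisymm le_one' (hx.symm.trans_le (hf.2.1 (le_one' (t := x))))

section Frechet

variable {E : Type*} [PseudoMetricSpace E] {A B : I → E} {r : ℝ}

lemma frechetDist_nonneg (A B : I → E) : 0 ≤ frechetDist A B :=
  Real.sInf_nonneg fun _ ⟨_, _, _, _, _, _, _, _, h⟩ => dist_nonneg.trans (h 0)

lemma frechetDist_le_of_dist_le {f g : I → I} (hf : IsReparam f) (hg : IsReparam g)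
    (h : ∀ t, dist (A (f t)) (B (g t)) ≤ r) : frechetDist A B ≤ r :=
  csInf_le ⟨0, fun _ ⟨_, _, _, _, _, _, _, _, h⟩ => dist_nonneg.trans (h 0)⟩
    ⟨f, g, hf.1, hf.2.1, hf.2.2, hg.1, hg.2.1, hg.2.2, h⟩

lemma exists_isReparam_of_frechetDist_lt (hA : Continuous A) (hB : Continuous B)
    (h : frechetDist A B < r) :
    ∃ f g : I → I, IsReparam f ∧ IsReparam g ∧ ∀ t, dist (A (f t)) (B (g t)) ≤ r := by
  rw [frechetDist, csInf_lt_iff] at h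
  · obtain ⟨r', ⟨f, g, hf, hf', hf'', hg, hg', hg'', hfg⟩, hr'⟩ := h
    exact ⟨f, g, ⟨hf, hf', hf''⟩, ⟨hg, hg', hg''⟩, fun t => (hfg t).trans hr'.le⟩
  · exact ⟨0, fun _ ⟨_, _, _, _, _, _, _, _, h⟩ => dist_nonneg.trans (h 0)⟩
  · obtain ⟨C, hC⟩ := (isCompact_range (hA.dist hB)).bddAbove
    exact ⟨C, id, id, continuous_id, monotone_id, surjective_id, continuous_id, monotone_id,
      surjective_id, fun t => hC ⟨t, rfl⟩⟩

/-- `h` sends `s` to the point of `A` matched with `B s` at some time `sec s` when the matching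
visits `s`; a section `sec` of the monotone map `g` is automatically monotone. -/
lemma exists_monotone_dist_le_of_frechetDist_lt (hA : Continuous A) (hB : Continuous B)
    (h : frechetDist A B < r) :
    ∃ h : I → I, Monotone h ∧ h 0 = 0 ∧ h 1 = 1 ∧ ∀ s, dist (A (h s)) (B s) ≤ r := by
  classical
  obtain ⟨f, g, hf, hg, hfg⟩ := exists_isReparam_of_frechetDist_lt hA hB h
  let sec (s : I) : I := if s = 0 then 0 else if s = 1 then 1 else surjInv hg.2.2 s
  have hsec : LeftInverse g sec := fun s => by
    by_cases h₀ : s = 0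
    · simp [sec, h₀, hg.map_zero]
    by_cases h₁ : s = 1
    · simp [sec, h₁, hg.map_one]
    simp [sec, h₀, h₁, surjInv_eq]
  have hsec_mono : StrictMono sec := fun x y hxy =>
    hg.2.1.reflect_lt (by rwa [hsec x, hsec y])
  refine ⟨f ∘ sec, hf.2.1.comp hsec_mono.monotone, by simp [sec, hf.map_zero],
    by simp [sec, hf.map_one], fun s => ?_⟩
  simpa [hsec s] using hfg (sec s)

end Frechet

lemma exists_castSucc_le_and_le_succ {α : Type*} [LinearOrder α] {n : ℕ} (hn : 1 ≤ n)
    (t : Fin (n + 1) → α) {x : α} (h₀ : t 0 ≤ x) (h₁ : x ≤ t (Fin.last n)) :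
    ∃ a : Fin n, t a.castSucc ≤ x ∧ x ≤ t a.succ := by
  obtain ⟨k, rfl⟩ : ∃ k, n = k + 1 := ⟨n - 1, by omega⟩
  by_contra! h
  have hle : ∀ i, t i ≤ x := fun i => Fin.induction h₀ (fun a ha => (h a ha).le) i
  exact (h (Fin.last k) (hle _)).not_ge (by simpa using h₁)

lemma sum_eq_val_add_of_step {n : ℕ} {c : Fin n → ℝ} (a : Fin n) (hlt : ∀ b < a, c b = 1)
    (hgt : ∀ b, a < b → c b = 0) : ∑ b, c b = a + c a := by
  have : ∀ b, c b = (if b < a then 1 else 0) + if b = a then c a else 0 := fun b => by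
    rcases lt_trichotomy b a with h | rfl | h
    · simp [h, h.ne, hlt]
    · simp
    · simp [h.ne', not_lt_of_gt h, hgt b h]
  simp [Finset.sum_congr rfl fun b _ => this b, Finset.sum_add_distrib, Finset.sum_boole,
    Finset.filter_gt_eq_Iio]

lemma subcurve_continuous {E : Type*} [TopologicalSpace E] {P : I → E} (hP : Continuous P)
    (a b : I) : Continuous (subcurve P a b) :=
  hP.comp (by fun_prop)

noncomputable def edgeParam (a b x : I) : I :=
  projIcc 0 1 zero_le_one (((x : ℝ) - a) / ((b : ℝ) - a))

lemma edgeParam_monotone {a b : I} (hab : a ≤ b) : Monotone (edgeParam a b) := fun _ _ hxy =>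
  monotone_projIcc _ <| div_le_div_of_nonneg_right (sub_le_sub_right (α := ℝ) hxy _)
    (sub_nonneg (a := (b : ℝ)).2 hab)

lemma edgeParam_of_le {a b x : I} (hab : a ≤ b) (hx : x ≤ a) : edgeParam a b x = 0 :=
  projIcc_of_le_left _ <| div_nonpos_of_nonpos_of_nonneg (sub_nonpos (a := (x : ℝ)).2 hx)
    (sub_nonneg (a := (b : ℝ)).2 hab)

lemma edgeParam_of_ge {a b x : I} (hab : a < b) (hx : b ≤ x) : edgeParam a b x = 1 :=
  projIcc_of_right_le _ <| (one_le_div (sub_pos (a := (b : ℝ)).2 hab)).2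
    (sub_le_sub_right (α := ℝ) hx _)

lemma subcurve_edgeParam {E : Type*} (P : I → E) {a b x : I} (hab : a < b) (hax : a ≤ x)
    (hxb : x ≤ b) :
    subcurve P a b (edgeParam a b x) = P x := by
  have hab' : (0 : ℝ) < b - a := sub_pos (a := (b : ℝ)).2 hab
  have hmem : ((x : ℝ) - a) / (b - a) ∈ Icc (0 : ℝ) 1 :=
    ⟨div_nonneg (sub_nonneg (a := (x : ℝ)).2 hax) hab'.le,
      (div_le_one hab').2 (sub_le_sub_right (α := ℝ) hxb _)⟩
  simp only [subcurve, edgeParam, projIcc_of_mem _ hmem]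
  congr 1
  ext
  field_simp
  ring

section VertexMatching

variable {E : Type*} [NormedAddCommGroup E] [NormedSpace ℝ E]

lemma segCurve_continuous (a b : E) : Continuous (segCurve a b) := by
  unfold segCurve; fun_prop

def IsVertexMatching (c : ℝ) (P : I → E) {m : ℕ} (t : Fin (m + 1) → I) (U : I → I) : Prop :=
  Monotone U ∧ (∀ i, U (t i) = vparam m i) ∧
    ∀ x, dist (polyCurve m (fun i => P (t i)) (U x)) (P x) ≤ c

/-- Glue monotone matchings `h i` of the edges: on the `i`-th piece `[t i, t (i+1)]` of `P`,
`U` runs through `[i/m, (i+1)/m]` as `(i + h i (local parameter)) / m`.  Writing this as a sum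
over all edges, whose other terms are `0` or `1`, makes `U` monotone at a glance. -/
lemma exists_isVertexMatching {P : I → E} (hP : Continuous P) {m : ℕ} (hm : 1 ≤ m)
    {t : Fin (m + 1) → I} (ht : StrictMono t) (ht₀ : t 0 = 0) (ht₁ : t (Fin.last m) = 1)
    {c : ℝ} (hloc : ∀ i : Fin m, frechetDist (segCurve (P (t i.castSucc)) (P (t i.succ)))
      (subcurve P (t i.castSucc) (t i.succ)) < c) :
    ∃ U, IsVertexMatching c P t U := by
  have hedge (i : Fin m) : t i.castSucc < t i.succ := ht i.castSucc_lt_succ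
  choose h hmono h₀ h₁ hdist using fun i => exists_monotone_dist_le_of_frechetDist_lt
    (segCurve_continuous _ _) (subcurve_continuous hP _ _) (hloc i)
  let τ (i : Fin m) (x : I) : I := edgeParam (t i.castSucc) (t i.succ) x
  let S (x : I) : ℝ := ∑ i, (h i (τ i x) : ℝ)
  have hS {x : I} {a : Fin m} (hax : t a.castSucc ≤ x) (hxa : x ≤ t a.succ) :
      S x = a + h a (τ a x) := by
    refine sum_eq_val_add_of_step a (fun b hb => ?_) (fun b hb => ?_)
    · have := (ht.monotone (Fin.succ_le_castSucc_iff.2 hb)).trans hax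
      simp [τ, edgeParam_of_ge (hedge b) this, h₁]
    · have := hxa.trans (ht.monotone (Fin.succ_le_castSucc_iff.2 hb))
      simp [τ, edgeParam_of_le (hedge b).le this, h₀]
  have hcover (x : I) : ∃ a : Fin m, t a.castSucc ≤ x ∧ x ≤ t a.succ :=
    exists_castSucc_le_and_le_succ hm t (ht₀ ▸ nonneg') (ht₁ ▸ le_one')
  have hm' : (0 : ℝ) < m := by exact_mod_cast hm
  have hSm (x : I) : S x / m ∈ I := by
    obtain ⟨a, hax, hxa⟩ := hcover x
    obtain ⟨hh₀, hh₁⟩ := (h a (τ a x)).2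
    have : (a : ℝ) + 1 ≤ m := by exact_mod_cast a.isLt
    rw [hS hax hxa]
    exact ⟨by positivity, (div_le_one hm').2 (by linarith)⟩
  have hSm' (x : I) : (S x / m) * m = S x := div_mul_cancel₀ _ hm'.ne'
  refine ⟨fun x => ⟨S x / m, hSm x⟩, fun x y hxy => ?_, fun i => ?_, fun x => ?_⟩
  · show S x / m ≤ S y / m
    exact div_le_div_of_nonneg_right (Finset.sum_le_sum fun i _ =>
      hmono i (edgeParam_monotone (hedge i).le hxy)) hm'.le
  · refine Subtype.ext (congrArg (· / (m : ℝ)) ?_)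
    induction i using Fin.lastCases with
    | last =>
      have hlast : (⟨m - 1, by omega⟩ : Fin m).succ = Fin.last m := by ext; simp; omega
      rw [hS (a := ⟨m - 1, by omega⟩) (ht.monotone (Fin.le_last _)) (congrArg t hlast).ge]
      simp [τ, edgeParam_of_ge (hedge _) (congrArg t hlast).le, h₁, Nat.cast_sub hm]
    | cast a =>
      rw [hS le_rfl (hedge a).le]
      simp [τ, edgeParam_of_le (hedge a).le le_rfl, h₀]
  · obtain ⟨a, hax, hxa⟩ := hcover x
    obtain ⟨hh₀, hh₁⟩ := (h a (τ a x)).2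
    have hUx : ((⟨S x / m, hSm x⟩ : I) : ℝ) * m = a + h a (τ a x) := by
      rw [← hS hax hxa]; exact hSm' x
    have := hdist a (τ a x)
    rw [subcurve_edgeParam P (hedge a) hax hxa] at this
    rw [polyCurve_edge _ a (by linarith) (by linarith), hUx]
    simpa [segCurve] using this

end VertexMatching

lemma vparam_zero (n : ℕ) : vparam n 0 = 0 :=
  Subtype.ext (by simp [coe_vparam])

lemma vparam_last {n : ℕ} (hn : 1 ≤ n) : vparam n (Fin.last n) = 1 :=
  Subtype.ext (by simp [coe_vparam, show (n : ℝ) ≠ 0 by positivity])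

lemma exists_isReparam_polyCurve {N : ℕ} (hN : 1 ≤ N) {w : Fin (N + 1) → I} (hw : Monotone w)
    (h₀ : w 0 = 0) (h₁ : w (Fin.last N) = 1) :
    ∃ f : I → I, IsReparam f ∧ ∀ θ, (f θ : ℝ) = polyCurve N (fun j => (w j : ℝ)) θ := by
  set F := polyCurve N (fun j => (w j : ℝ))
  have hF : Monotone F := polyCurve_monotone fun _ _ h => hw h
  have hF₀ : F 0 = 0 := by
    simpa [F, vparam_zero, h₀] using polyCurve_vparam (fun j => (w j : ℝ)) 0
  have hF₁ : F 1 = 1 := by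
    simpa [F, vparam_last hN, h₁] using polyCurve_vparam (fun j => (w j : ℝ)) (Fin.last N)
  have hFI (θ : I) : F θ ∈ I := ⟨hF₀ ▸ hF nonneg', hF₁ ▸ hF le_one'⟩
  refine ⟨fun θ => ⟨F θ, hFI θ⟩, ⟨(polyCurve_continuous _).subtype_mk _, fun _ _ h => hF h,
    fun y => ?_⟩, fun _ => rfl⟩
  have hy : (y : ℝ) ∈ Icc (F 0) (F 1) := by rw [hF₀, hF₁]; exact y.2
  obtain ⟨θ, hθ⟩ := intermediate_value_univ 0 1 (polyCurve_continuous _) hy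
  exact ⟨θ, Subtype.ext hθ⟩

section Chain

variable {n N : ℕ} {w : Fin (N + 1) → I}

lemma map_zero_and_map_last_of_covers (hn : 1 ≤ n) (hw : Monotone w)
    (hcov : ∀ a, ∃ j, w j = vparam n a) : w 0 = 0 ∧ w (Fin.last N) = 1 := by
  obtain ⟨j₀, hj₀⟩ := hcov 0
  obtain ⟨j₁, hj₁⟩ := hcov (Fin.last n)
  rw [vparam_zero] at hj₀
  rw [vparam_last hn] at hj₁
  exact ⟨le_antisymm (hj₀ ▸ hw (Fin.zero_le j₀)) nonneg',
    le_antisymm le_one' (hj₁ ▸ hw (Fin.le_last j₁))⟩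

lemma vparam_notMem_Ioo_of_covers (hw : Monotone w) (hcov : ∀ a, ∃ j, w j = vparam n a)
    (s : Fin N) (a : Fin (n + 1)) : vparam n a ∉ Ioo (w s.castSucc) (w s.succ) := by
  rintro ⟨h₁, h₂⟩
  obtain ⟨j, hj⟩ := hcov a
  rw [← hj] at h₁ h₂
  exact (Fin.castSucc_lt_iff_succ_le.1 (hw.reflect_lt h₁)).not_gt (hw.reflect_lt h₂)

end Chain

lemma dist_convexComb_le {E : Type*} [SeminormedAddCommGroup E] [NormedSpace ℝ E] {μ : ℝ}
    (hμ : μ ∈ Icc (0 : ℝ) 1) (a b c d : E) :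
    dist ((1 - μ) • a + μ • b) ((1 - μ) • c + μ • d) ≤ (1 - μ) * dist a c + μ * dist b d := by
  refine (dist_add_add_le _ _ _ _).trans_eq ?_
  rw [dist_smul₀, dist_smul₀, Real.norm_of_nonneg (sub_nonneg.2 hμ.2), Real.norm_of_nonneg hμ.1]

/-- The matching interpolates linearly between consecutive matched pairs `(u j, v j)`.  As every
vertex of either polygon occurs among the `u j` (resp. `v j`), no vertex lies strictly between
consecutive ones, so both polygons are affine there and the distance stays below `r`. -/
theorem frechetDist_polyCurve_le_of_chain {E : Type*} [NormedAddCommGroup E] [NormedSpace ℝ E]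
    {m k N : ℕ} (hm : 1 ≤ m) (hk : 1 ≤ k) (p : Fin (m + 1) → E) (q : Fin (k + 1) → E)
    {u v : Fin (N + 1) → I} (hu : Monotone u) (hv : Monotone v)
    (hucov : ∀ a, ∃ j, u j = vparam m a) (hvcov : ∀ b, ∃ j, v j = vparam k b) {r : ℝ}
    (hr : ∀ j, dist (polyCurve m p (u j)) (polyCurve k q (v j)) ≤ r) :
    frechetDist (polyCurve m p) (polyCurve k q) ≤ r := by
  obtain ⟨hu₀, hu₁⟩ := map_zero_and_map_last_of_covers hm hu hucov
  obtain ⟨hv₀, hv₁⟩ := map_zero_and_map_last_of_covers hk hv hvcov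
  have hN : 1 ≤ N := by
    by_contra! h
    obtain rfl : N = 0 := by omega
    exact zero_ne_one (hu₀.symm.trans hu₁)
  obtain ⟨f, hf, hfu⟩ := exists_isReparam_polyCurve hN hu hu₀ hu₁
  obtain ⟨g, hg, hgv⟩ := exists_isReparam_polyCurve hN hv hv₀ hv₁
  refine frechetDist_le_of_dist_le hf hg fun θ => ?_
  obtain ⟨s, μ, hμ, hθ⟩ := polyCurve_mem_edge (E := ℝ) hN θ
  rw [polyCurve_affine_of_vparam_notMem hm p (hu s.castSucc_le_succ)
      (vparam_notMem_Ioo_of_covers hu hucov s) hμ (by simp [hfu, hθ]),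
    polyCurve_affine_of_vparam_notMem hk q (hv s.castSucc_le_succ)
      (vparam_notMem_Ioo_of_covers hv hvcov s) hμ (by simp [hgv, hθ])]
  calc _ ≤ (1 - μ) * r + μ * r := (dist_convexComb_le hμ _ _ _ _).trans
        (add_le_add (mul_le_mul_of_nonneg_left (hr _) (sub_nonneg.2 hμ.2))
          (mul_le_mul_of_nonneg_left (hr _) hμ.1))
    _ = r := by ring

theorem frechetDist_polyCurve_le_of_events {E : Type*} [NormedAddCommGroup E] [NormedSpace ℝ E]
    {m k : ℕ} (hm : 1 ≤ m) (hk : 1 ≤ k) (p : Fin (m + 1) → E) (q : Fin (k + 1) → E)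
    (S : Finset I) {u v : I → I} (hu : MonotoneOn u S) (hv : MonotoneOn v S)
    (hucov : ∀ a, ∃ θ ∈ S, u θ = vparam m a) (hvcov : ∀ b, ∃ θ ∈ S, v θ = vparam k b) {r : ℝ}
    (hr : ∀ θ ∈ S, dist (polyCurve m p (u θ)) (polyCurve k q (v θ)) ≤ r) :
    frechetDist (polyCurve m p) (polyCurve k q) ≤ r := by
  obtain ⟨N, hN⟩ : ∃ N, S.card = N + 1 := by
    obtain ⟨θ, hθ, -⟩ := hucov 0
    exact ⟨S.card - 1, (Nat.succ_pred_eq_of_pos (Finset.card_pos.2 ⟨θ, hθ⟩)).symm⟩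
  let e := S.orderEmbOfFin hN
  have he (j) : e j ∈ S := S.orderEmbOfFin_mem hN j
  have hcov {w : I → I} {n : ℕ} (hw : ∀ a, ∃ θ ∈ S, w θ = vparam n a) (a) :
      ∃ j, (w ∘ e) j = vparam n a := by
    obtain ⟨θ, hθ, hwθ⟩ := hw a
    obtain ⟨j, rfl⟩ : θ ∈ Set.range e := by rwa [S.range_orderEmbOfFin hN]
    exact ⟨j, hwθ⟩
  exact frechetDist_polyCurve_le_of_chain hm hk p q
    (fun i j hij => hu (he i) (he j) (e.monotone hij))
    (fun i j hij => hv (he i) (he j) (e.monotone hij)) (hcov hucov) (hcov hvcov)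
    fun j => hr _ (he j)

/-- Sample the matching `(φ, ψ)` of `P` and `Q` at the times where it passes the vertices of
either polygon.  At a vertex of one polygon that polygon agrees with its curve, so only one of
the two vertex matchings contributes to the distance. -/
theorem frechetDist_polyCurve_le_of_isVertexMatching {E : Type*} [NormedAddCommGroup E]
    [NormedSpace ℝ E] {P Q : I → E} {m k : ℕ} (hm : 1 ≤ m) (hk : 1 ≤ k)
    {t : Fin (m + 1) → I} {s : Fin (k + 1) → I} {φ ψ : I → I} (hφ : Monotone φ)
    (hφs : Surjective φ) (hψ : Monotone ψ) (hψs : Surjective ψ) {a b c : ℝ}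
    (hPQ : ∀ θ, dist (P (φ θ)) (Q (ψ θ)) ≤ c) {U V : I → I} (hU : IsVertexMatching a P t U)
    (hV : IsVertexMatching b Q s V) :
    frechetDist (polyCurve m fun i => P (t i)) (polyCurve k fun j => Q (s j)) ≤
      max (a + c) (c + b) := by
  classical
  choose θP hθP using fun i => hφs (t i)
  choose θQ hθQ using fun j => hψs (s j)
  refine frechetDist_polyCurve_le_of_events hm hk _ _
    (Finset.univ.image θP ∪ Finset.univ.image θQ) (u := U ∘ φ) (v := V ∘ ψ)
    ((hU.1.comp hφ).monotoneOn _) ((hV.1.comp hψ).monotoneOn _)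
    (fun i => ⟨θP i, by simp, by simp [hθP, hU.2.1]⟩)
    (fun j => ⟨θQ j, by simp, by simp [hθQ, hV.2.1]⟩) fun θ hθ => ?_
  rcases Finset.mem_union.1 hθ with h | h <;> obtain ⟨i, -, rfl⟩ := Finset.mem_image.1 h
  · simp only [comp_apply, hθP, hU.2.1, polyCurve_vparam]
    calc _ ≤ dist (P (t i)) (Q (ψ (θP i))) + dist (Q (ψ (θP i))) _ := dist_triangle _ _ _
      _ ≤ c + b := add_le_add (hθP i ▸ hPQ _) ((dist_comm _ _).trans_le (hV.2.2 _))
      _ ≤ _ := le_max_right _ _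
  · simp only [comp_apply, hθQ, hV.2.1, polyCurve_vparam]
    calc _ ≤ dist _ (P (φ (θQ i))) + dist (P (φ (θQ i))) (Q (s i)) := dist_triangle _ _ _
      _ ≤ a + c := add_le_add (hU.2.2 _) (hθQ i ▸ hPQ _)
      _ ≤ _ := le_max_left _ _

lemma SignatureData.one_le {δ : ℝ} {Q : I → ℝ} {ℓ : ℕ} {t : Fin (ℓ + 1) → I}
    (h : SignatureData δ Q ℓ t) : 1 ≤ ℓ := by
  obtain ⟨-, h₀, h₁, -⟩ := h
  rcases ℓ with _ | ℓ
  · exact absurd (h₀.symm.trans h₁) zero_ne_one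
  · omega

theorem frechetDist_signatures_le_three_general (δ : ℝ)
    (P Q P' Q' : unitInterval → ℝ) (hPc : Continuous P) (hQc : Continuous Q)
    (hPQ : frechetDist P Q ≤ δ)
    (hP' : IsSignature δ P P') (hQ' : IsSignature (2 * δ) Q Q') :
    frechetDist P' Q' ≤ 3 * δ := by
  obtain ⟨m, t, htP, rfl⟩ := hP'
  obtain ⟨k, s, hsQ, rfl⟩ := hQ'
  have hm := htP.one_le
  have hk := hsQ.one_le
  obtain ⟨ht, ht₀, ht₁, hlocP, -⟩ := htP
  obtain ⟨hs, hs₀, hs₁, hlocQ, -⟩ := hsQ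
  have hδ : 0 ≤ δ := (frechetDist_nonneg P Q).trans hPQ
  refine le_of_forall_pos_le_add fun ε hε => ?_
  have hlt {x y : ℝ} (h : x ≤ y) : x < y + ε / 2 := by linarith
  obtain ⟨φ, ψ, hφ, hψ, hφψ⟩ := exists_isReparam_of_frechetDist_lt hPc hQc (hlt hPQ)
  obtain ⟨U, hU⟩ := exists_isVertexMatching hPc hm ht ht₀ ht₁ fun i => hlt (hlocP i)
  obtain ⟨V, hV⟩ := exists_isVertexMatching hQc hk hs hs₀ hs₁ fun i => hlt (hlocQ i)
  calc _ ≤ max ((δ + ε / 2) + (δ + ε / 2)) ((δ + ε / 2) + (2 * δ + ε / 2)) :=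
        frechetDist_polyCurve_le_of_isVertexMatching hm hk hφ.2.1 hφ.2.2 hψ.2.1 hψ.2.2 hφψ
          hU hV
    _ = 3 * δ + ε := by rw [max_eq_right (by linarith)]; ring

/-- If `d_F(P, Q) ≤ δ`, `P'` is a `δ`-signature of `P` and `Q'` is a
`2δ`-signature of `Q`, then `d_F(P', Q') ≤ 3δ`. -/
theorem frechetDist_signatures_le_three (δ : ℝ) (hδ : 0 < δ)
    (P Q P' Q' : unitInterval → ℝ) (hPc : Continuous P) (hQc : Continuous Q)
    (hPQ : frechetDist P Q ≤ δ)
    (hP' : IsSignature δ P P') (hQ' : IsSignature (2 * δ) Q Q') :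
    frechetDist P' Q' ≤ 3 * δ :=
  frechetDist_signatures_le_three_general δ P Q P' Q' hPc hQc hPQ hP' hQ'
end

section
/- Let P : [0,1] → R and Q : [0,1] → R be curves with d_F(P, Q) ≤ δ and let P' be a δ-signature of P with vertices v_1, …, v_ℓ in order. Then there exists a δ-visiting order of P' on Q: a nondecreasing sequence of indices i_1 ≤ … ≤ i_ℓ into the ordered vertex sequence u_1, …, u_k of Q such that |v_j − u_{i_j}| ≤ δ for each j. -/
open Set unitInterval Filter Topology

namespace PolyCurve

variable {k : ℕ}

lemma vparam_mul (hk : k ≠ 0) (i : Fin (k + 1)) : (vparam k i : ℝ) * k = i :=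
  div_mul_cancel₀ _ (Nat.cast_ne_zero.2 hk)

def edge (e : Fin k) : Set I := Icc (vparam k e.castSucc) (vparam k e.succ)

lemma mem_edge {e : Fin k} {w : I} :
    w ∈ edge e ↔ (e : ℝ) ≤ w * k ∧ (w : ℝ) * k ≤ e + 1 := by
  have hk : (0 : ℝ) < k := Nat.cast_pos.2 (Nat.zero_lt_of_lt e.isLt)
  simp only [edge, mem_Icc, ← Subtype.coe_le_coe, vparam, div_le_iff₀ hk, le_div_iff₀ hk,
    Fin.val_castSucc, Fin.val_succ, Nat.cast_succ]

lemma vparam_mem_edge {e : Fin k} {i : Fin (k + 1)} (hi : i = e.castSucc ∨ i = e.succ) :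
    vparam k i ∈ edge e := by
  rw [mem_edge, vparam_mul (Nat.ne_zero_of_lt e.isLt)]
  rcases hi with rfl | rfl <;> simp

lemma polyCurve_of_mem_edge (u : Fin (k + 1) → ℝ) {e : Fin k} {w : I} (hw : w ∈ edge e) :
    polyCurve k u w = u e.castSucc + ((w : ℝ) * k - e) * (u e.succ - u e.castSucc) := by
  obtain ⟨hlo, hhi⟩ := mem_edge.1 hw
  have he := e.isLt
  have hx : (0 : ℝ) ≤ w * k := (Nat.cast_nonneg _).trans hlo
  simp only [polyCurve, smul_eq_mul]
  rcases hhi.lt_or_eq with hlt | heq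
  · have hfl : ⌊(w : ℝ) * k⌋₊ = e := (Nat.floor_eq_iff hx).2 ⟨hlo, hlt⟩
    have hi : min ⌊(w : ℝ) * k⌋₊ (k - 1) = e := by omega
    simp only [hi, show min (e : ℕ) k = e by omega, show min ((e : ℕ) + 1) k = e + 1 by omega]
    simp only [Fin.castSucc, Fin.succ, Fin.castAdd, Fin.castLE]
    ring
  · have hfl : ⌊(w : ℝ) * k⌋₊ = e + 1 := by rw [heq]; exact_mod_cast Nat.floor_natCast _
    by_cases hek : (e : ℕ) + 1 = k
    · have hi : min ⌊(w : ℝ) * k⌋₊ (k - 1) = e := by omega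
      simp only [hi, show min (e : ℕ) k = e by omega, show min ((e : ℕ) + 1) k = e + 1 by omega]
      simp only [Fin.castSucc, Fin.succ, Fin.castAdd, Fin.castLE, heq]
      ring
    · have hi : min ⌊(w : ℝ) * k⌋₊ (k - 1) = e + 1 := by omega
      simp only [hi, show min ((e : ℕ) + 1) k = e + 1 by omega]
      simp only [Fin.castSucc, Fin.succ, Fin.castAdd, Fin.castLE, heq]
      push_cast
      ring

lemma polyCurve_neg (u : Fin (k + 1) → ℝ) : polyCurve k (-u) = -polyCurve k u := by
  ext w
  simp only [polyCurve, smul_eq_mul, Pi.neg_apply]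
  ring

lemma polyCurve_vparam (u : Fin (k + 1) → ℝ) {e : Fin k} {i : Fin (k + 1)}
    (hi : i = e.castSucc ∨ i = e.succ) : polyCurve k u (vparam k i) = u i := by
  rw [polyCurve_of_mem_edge u (vparam_mem_edge hi), vparam_mul (Nat.ne_zero_of_lt e.isLt)]
  rcases hi with rfl | rfl <;> simp

lemma monotoneOn_polyCurve_edge {u : Fin (k + 1) → ℝ} {e : Fin k}
    (hu : u e.castSucc ≤ u e.succ) : MonotoneOn (polyCurve k u) (edge e) := by
  intro w hw w' hw' hww'
  rw [polyCurve_of_mem_edge u hw, polyCurve_of_mem_edge u hw']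
  have : (w : ℝ) * k ≤ w' * k := by gcongr
  nlinarith

lemma polyCurve_mapsTo_uIcc (u : Fin (k + 1) → ℝ) {e : Fin k} {w w' : I}
    (hw : w ∈ edge e) (hw' : w' ∈ edge e) :
    MapsTo (polyCurve k u) (uIcc w w') (uIcc (polyCurve k u w) (polyCurve k u w')) := by
  have hsub : uIcc w w' ⊆ edge e := ordConnected_Icc.uIcc_subset hw hw'
  rcases le_total (u e.castSucc) (u e.succ) with hu | hu
  · exact ((monotoneOn_polyCurve_edge hu).mono hsub).mapsTo_uIcc
  · have hneg : (-u) e.castSucc ≤ (-u) e.succ := neg_le_neg hu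
    intro x hx
    have := ((monotoneOn_polyCurve_edge hneg).mono hsub).mapsTo_uIcc hx
    simp only [polyCurve_neg, Pi.neg_apply, ← image_neg_uIcc] at this
    obtain ⟨y, hy, hyx⟩ := this
    rwa [neg_inj.1 hyx] at hy

lemma polyCurve_mem_uIcc_of_mem_edge (u : Fin (k + 1) → ℝ) {e : Fin k} {w : I}
    (hw : w ∈ edge e) : polyCurve k u w ∈ uIcc (u e.castSucc) (u e.succ) := by
  have h := polyCurve_mapsTo_uIcc u (vparam_mem_edge (.inl rfl)) (vparam_mem_edge (.inr rfl))
    (Icc_subset_uIcc hw)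
  rwa [polyCurve_vparam u (.inl rfl), polyCurve_vparam u (.inr rfl)] at h

/-- The edge whose formula `polyCurve` uses at the parameter `w`. -/
noncomputable def edgeOf [NeZero k] (w : I) : Fin k :=
  ⟨min ⌊(w : ℝ) * k⌋₊ (k - 1), by have := NeZero.pos k; omega⟩

lemma mem_edge_edgeOf [NeZero k] (w : I) : w ∈ edge (edgeOf w : Fin k) := by
  have hk : 0 < k := NeZero.pos k
  have hx : (0 : ℝ) ≤ w * k := mul_nonneg w.2.1 (Nat.cast_nonneg k)
  have hxk : (w : ℝ) * k ≤ k := mul_le_of_le_one_left (Nat.cast_nonneg k) w.2.2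
  rw [mem_edge]
  simp only [edgeOf]
  by_cases h : ⌊(w : ℝ) * k⌋₊ ≤ k - 1
  · rw [min_eq_left h]
    exact ⟨Nat.floor_le hx, (Nat.lt_floor_add_one _).le⟩
  · have hfl : k ≤ ⌊(w : ℝ) * k⌋₊ := by omega
    have : (k : ℝ) ≤ w * k := (Nat.le_floor_iff hx).1 hfl
    rw [min_eq_right (by omega), Nat.cast_sub (by omega)]
    push_cast
    constructor <;> linarith

lemma monotone_edgeOf [NeZero k] : Monotone (edgeOf : I → Fin k) := by
  intro w w' h
  simp only [edgeOf, Fin.mk_le_mk]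
  have : ⌊(w : ℝ) * k⌋₊ ≤ ⌊(w' : ℝ) * k⌋₊ := Nat.floor_le_floor (by gcongr)
  omega

lemma polyCurve_apply_zero (u : Fin (k + 1) → ℝ) : polyCurve k u 0 = u 0 := by
  simp [polyCurve]

lemma polyCurve_apply_one (u : Fin (k + 1) → ℝ) : polyCurve k u 1 = u (Fin.last k) := by
  rcases Nat.eq_zero_or_pos k with rfl | hk
  · simp [polyCurve]
  · let e : Fin k := ⟨k - 1, by omega⟩
    have he : e.succ = Fin.last k := Fin.ext (by simp [e]; omega)
    have h1 : vparam k (Fin.last k) = 1 := Subtype.ext (by simp [vparam, hk.ne'])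
    rw [← h1, polyCurve_vparam u (e := e) (.inr he.symm)]

lemma polyCurve_zero (u : Fin 1 → ℝ) (w : I) : polyCurve 0 u w = u 0 := by
  simp [polyCurve]

open Bornology in
lemma isBounded_range_polyCurve (u : Fin (k + 1) → ℝ) : IsBounded (range (polyCurve k u)) := by
  refine (isBounded_convexHull.2 (finite_range u).isBounded).subset ?_
  rintro _ ⟨w, rfl⟩
  rcases Nat.eq_zero_or_pos k with rfl | hk
  · rw [polyCurve_zero]
    exact subset_convexHull ℝ _ (mem_range_self 0)
  · have : NeZero k := NeZero.of_pos hk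
    have := polyCurve_mem_uIcc_of_mem_edge u (mem_edge_edgeOf w)
    rw [← segment_eq_uIcc] at this
    exact segment_subset_convexHull (mem_range_self _) (mem_range_self _) this

noncomputable def upperEnd (u : Fin (k + 1) → ℝ) (e : Fin k) : Fin (k + 1) :=
  if u e.castSucc ≤ u e.succ then e.succ else e.castSucc

lemma upperEnd_eq (u : Fin (k + 1) → ℝ) (e : Fin k) :
    upperEnd u e = e.castSucc ∨ upperEnd u e = e.succ := by
  unfold upperEnd; split_ifs <;> simp

lemma castSucc_le_upperEnd (u : Fin (k + 1) → ℝ) (e : Fin k) : e.castSucc ≤ upperEnd u e := by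
  rcases upperEnd_eq u e with h | h <;> rw [h]; exact Fin.castSucc_le_succ e

lemma upperEnd_le_succ (u : Fin (k + 1) → ℝ) (e : Fin k) : upperEnd u e ≤ e.succ := by
  rcases upperEnd_eq u e with h | h <;> rw [h]; exact Fin.castSucc_le_succ e

lemma le_upperEnd_of_mem_uIcc {u : Fin (k + 1) → ℝ} {e : Fin k} {x : ℝ}
    (hx : x ∈ uIcc (u e.castSucc) (u e.succ)) : x ≤ u (upperEnd u e) := by
  have := mem_uIcc.1 hx
  unfold upperEnd; split_ifs <;> grind

lemma upperEnd_le_upperEnd_neg {u : Fin (k + 1) → ℝ} {e : Fin k} {w w' : I}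
    (hw : w ∈ edge e) (hw' : w' ∈ edge e) (hww' : w ≤ w') {p p' δ : ℝ}
    (hp : |p - polyCurve k u w| ≤ δ) (hp' : |p' - polyCurve k u w'| ≤ δ) (hpp' : p' + 2 * δ < p) :
    upperEnd u e ≤ upperEnd (-u) e := by
  unfold upperEnd
  split_ifs with hu hu'
  · exact le_rfl
  · have := monotoneOn_polyCurve_edge hu hw hw' hww'
    rw [abs_le] at hp hp'
    linarith
  · exact Fin.castSucc_le_succ e
  · exact le_rfl

end PolyCurve

open PolyCurve

def IsDominantMax {α : Type*} [LinearOrder α] (c : ℝ) (P : α → ℝ) (τ : α) : Prop :=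
  ∀ x, (∀ y ∈ uIcc τ x, P τ - c ≤ P y) → P x ≤ P τ

lemma isDominantMax_of_isMaxOn {α : Type*} [LinearOrder α] {c : ℝ} {P : α → ℝ} {a b τ : α}
    (hτ : τ ∈ Icc a b) (hmax : IsMaxOn P (Icc a b) τ)
    (ha : ∀ x < a, P a + c < P τ) (hb : ∀ x > b, P b + c < P τ) : IsDominantMax c P τ := by
  intro x hdip
  by_contra! hx
  rcases lt_or_ge x a with hxa | hax
  · have := hdip a ⟨inf_le_right.trans hxa.le, le_sup_of_le_left hτ.1⟩
    linarith [ha x hxa]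
  rcases le_or_gt x b with hxb | hbx
  · exact hx.not_ge (hmax ⟨hax, hxb⟩)
  · have := hdip b ⟨inf_le_left.trans hτ.2, le_sup_of_le_right hbx.le⟩
    linarith [hb x hbx]

structure IsFrechetMatching {E : Type*} [PseudoMetricSpace E] (δ : ℝ) (P Q : I → E)
    (f g : I → I) : Prop where
  continuous_left : Continuous f
  monotone_left : Monotone f
  surjective_left : Function.Surjective f
  continuous_right : Continuous g
  monotone_right : Monotone g
  surjective_right : Function.Surjective g
  dist_le : ∀ s, dist (P (f s)) (Q (g s)) ≤ δ

namespace IsFrechetMatching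

variable {E : Type*} [PseudoMetricSpace E] {δ : ℝ} {P Q : I → E} {f g : I → I}

lemma map_zero (hm : IsFrechetMatching δ P Q f g) : f 0 = 0 ∧ g 0 = 0 := by
  obtain ⟨s, hs⟩ := hm.surjective_left 0
  obtain ⟨s', hs'⟩ := hm.surjective_right 0
  exact ⟨le_antisymm ((hm.monotone_left nonneg').trans_eq hs) nonneg',
    le_antisymm ((hm.monotone_right nonneg').trans_eq hs') nonneg'⟩

lemma map_one (hm : IsFrechetMatching δ P Q f g) : f 1 = 1 ∧ g 1 = 1 := by
  obtain ⟨s, hs⟩ := hm.surjective_left 1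
  obtain ⟨s', hs'⟩ := hm.surjective_right 1
  exact ⟨le_antisymm le_one' (hs.symm.trans_le (hm.monotone_left le_one')),
    le_antisymm le_one' (hs'.symm.trans_le (hm.monotone_right le_one'))⟩

end IsFrechetMatching

open Bornology in
lemma exists_isFrechetMatching_of_frechetDist_lt {E : Type*} [PseudoMetricSpace E]
    {P Q : I → E} (hP : IsBounded (range P)) (hQ : IsBounded (range Q)) {r : ℝ}
    (hr : frechetDist P Q < r) : ∃ f g, IsFrechetMatching r P Q f g := by
  obtain ⟨C, hC⟩ := Metric.isBounded_iff.1 (hP.union hQ)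
  rw [frechetDist] at hr
  obtain ⟨r', ⟨f, g, hf, hfm, hfs, hg, hgm, hgs, hfg⟩, hr'⟩ := exists_lt_of_csInf_lt
    (by exact ⟨C, id, id, continuous_id, monotone_id, Function.surjective_id, continuous_id,
      monotone_id, Function.surjective_id,
      fun s => hC (.inl (mem_range_self s)) (.inr (mem_range_self s))⟩) hr
  exact ⟨f, g, hf, hfm, hfs, hg, hgm, hgs, fun s => (hfg s).trans hr'.le⟩

lemma IsFrechetMatching.abs_sub_le {δ : ℝ} {P Q : I → ℝ} {f g : I → I}
    (hm : IsFrechetMatching δ P Q f g) (s : I) : |P (f s) - Q (g s)| ≤ δ :=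
  hm.dist_le s

lemma IsFrechetMatching.neg {δ : ℝ} {P Q : I → ℝ} {f g : I → I}
    (hm : IsFrechetMatching δ P Q f g) : IsFrechetMatching δ (-P) (-Q) f g :=
  { hm with dist_le := fun s => (dist_neg_neg _ _).trans_le (hm.dist_le s) }

lemma abs_sub_upperEnd_le {δ : ℝ} {k : ℕ} {u : Fin (k + 1) → ℝ} {P : I → ℝ} {f g : I → I}
    (hm : IsFrechetMatching δ P (polyCurve k u) f g) {s : I} {e : Fin k} (he : g s ∈ edge e)
    (hP : IsDominantMax (2 * δ) P (f s)) : |P (f s) - u (upperEnd u e)| ≤ δ := by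
  set v := upperEnd u e
  have hv : vparam k v ∈ edge e := vparam_mem_edge (upperEnd_eq u e)
  have hQv : polyCurve k u (vparam k v) = u v := polyCurve_vparam u (upperEnd_eq u e)
  have hQs : polyCurve k u (g s) ≤ u v :=
    le_upperEnd_of_mem_uIcc (polyCurve_mem_uIcc_of_mem_edge u he)
  obtain ⟨s', hs'⟩ := hm.surjective_right (vparam k v)
  -- Between `s` and `s'` the matched point of `Q` stays on the edge `e`, above `Q (g s)`.
  have hdip : ∀ y ∈ uIcc (f s) (f s'), P (f s) - 2 * δ ≤ P y := by
    intro y hy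
    obtain ⟨r, hr, rfl⟩ := intermediate_value_uIcc hm.continuous_left.continuousOn hy
    have hgr : g r ∈ uIcc (g s) (vparam k v) := hs' ▸ hm.monotone_right.mapsTo_uIcc hr
    have hQr := polyCurve_mapsTo_uIcc u he hv hgr
    rw [hQv, uIcc_of_le hQs] at hQr
    have := hm.abs_sub_le s
    have := hm.abs_sub_le r
    rw [abs_le] at *
    linarith [hQr.1]
  have hPs' := hP _ hdip
  have h1 := hm.abs_sub_le s
  have h2 := hm.abs_sub_le s'
  rw [hs', hQv] at h2
  rw [abs_le] at *
  constructor <;> linarith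

namespace SignatureData

variable {δ : ℝ} {P : I → ℝ} {ℓ : ℕ} {t : Fin (ℓ + 1) → I}

lemma two_mul_lt_abs (hsig : SignatureData δ P ℓ t) {a b : Fin (ℓ + 1)} (hab : (a : ℕ) + 1 = b)
    (ha : a ≠ 0) (hb : b ≠ Fin.last ℓ) : 2 * δ < |P (t b) - P (t a)| := by
  have ha' : 1 ≤ (a : ℕ) := Nat.one_le_iff_ne_zero.2 (Fin.val_ne_zero_iff.2 ha)
  have hb' : (b : ℕ) < ℓ := Fin.val_lt_last hb
  convert hsig.2.2.2.2.2.2 a ha' (by omega) using 5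
  ext
  simp [hab]

lemma isMaxOn_or_isMinOn (hsig : SignatureData δ P ℓ t) {j : Fin (ℓ + 1)} (hj0 : j ≠ 0)
    (hjl : j ≠ Fin.last ℓ) :
    (P (t (j - 1)) < P (t j) ∧ P (t (j + 1)) < P (t j) ∧
        IsMaxOn P (Icc (t (j - 1)) (t (j + 1))) (t j)) ∨
      (P (t j) < P (t (j - 1)) ∧ P (t j) < P (t (j + 1)) ∧
        IsMinOn P (Icc (t (j - 1)) (t (j + 1))) (t j)) := by
  have h0 : 0 < (j : ℕ) := Nat.pos_of_ne_zero (Fin.val_ne_zero_iff.2 hj0)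
  have hl : (j : ℕ) < ℓ := Fin.val_lt_last hjl
  have hprev : j - 1 = ⟨j - 1, by omega⟩ := Fin.ext (Fin.val_sub_one_of_ne_zero hj0)
  have hnext : j + 1 = ⟨j + 1, by omega⟩ :=
    Fin.ext (Fin.val_add_one_of_lt (Fin.lt_last_iff_ne_last.2 hjl))
  rw [hprev, hnext, isMaxOn_iff, isMinOn_iff]
  simpa using hsig.2.2.2.2.1 j h0 hl

/-- Leaving the window `[t (j - 1), t (j + 1)]` of an interior vertex means crossing a
neighbouring vertex, which lies more than `2 * δ` below (above) it. -/
lemma isDominantMax_or (hsig : SignatureData δ P ℓ t) {j : Fin (ℓ + 1)} (hj0 : j ≠ 0)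
    (hjl : j ≠ Fin.last ℓ) :
    (P (t (j + 1)) < P (t j) ∧ IsDominantMax (2 * δ) P (t j)) ∨
      (P (t j) < P (t (j + 1)) ∧ IsDominantMax (2 * δ) (-P) (t j)) := by
  have hprev : ((j - 1 : Fin (ℓ + 1)) : ℕ) + 1 = j := by
    rw [Fin.val_sub_one_of_ne_zero hj0]
    have := Fin.val_ne_zero_iff.2 hj0
    omega
  have hnext : (j : ℕ) + 1 = (j + 1 : Fin (ℓ + 1)) :=
    (Fin.val_add_one_of_lt (Fin.lt_last_iff_ne_last.2 hjl)).symm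
  have hwin : t j ∈ Icc (t (j - 1)) (t (j + 1)) :=
    ⟨hsig.1.monotone (Fin.le_def.2 (by omega)), hsig.1.monotone (Fin.le_def.2 (by omega))⟩
  have gap_prev : ∀ x < t (j - 1), 2 * δ < |P (t j) - P (t (j - 1))| := by
    intro x hx
    refine hsig.two_mul_lt_abs hprev (fun h => ?_) hjl
    rw [h, hsig.2.1] at hx
    exact not_lt_of_ge (nonneg' : 0 ≤ x) hx
  have gap_next : ∀ x > t (j + 1), 2 * δ < |P (t (j + 1)) - P (t j)| := by
    intro x hx
    refine hsig.two_mul_lt_abs hnext hj0 (fun h => ?_)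
    rw [h, hsig.2.2.1] at hx
    exact not_lt_of_ge (le_one' : x ≤ 1) hx
  rcases hsig.isMaxOn_or_isMinOn hj0 hjl with ⟨hp, hn, hmax⟩ | ⟨hp, hn, hmin⟩
  · refine .inl ⟨hn, isDominantMax_of_isMaxOn hwin hmax (fun x hx => ?_) (fun x hx => ?_)⟩
    · have := gap_prev x hx
      rw [abs_of_pos (by linarith)] at this
      linarith
    · have := gap_next x hx
      rw [abs_of_neg (by linarith)] at this
      linarith
  · refine .inr ⟨hn, isDominantMax_of_isMaxOn hwin hmin.neg (fun x hx => ?_) (fun x hx => ?_)⟩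
    · have := gap_prev x hx
      rw [abs_of_neg (by linarith)] at this
      simp only [Pi.neg_apply]
      linarith
    · have := gap_next x hx
      rw [abs_of_pos (by linarith)] at this
      simp only [Pi.neg_apply]
      linarith

end SignatureData

section Visit

variable {k ℓ : ℕ} {δ : ℝ} {P : I → ℝ} {t : Fin (ℓ + 1) → I} {u : Fin (k + 1) → ℝ}

/-- `P (t (j + 1)) < P (t j)` singles out the maxima among the interior vertices; a maximum is
sent to the upper end of its edge `e j`, a minimum to the lower end. -/
noncomputable def visitIdx (P : I → ℝ) (t : Fin (ℓ + 1) → I) (u : Fin (k + 1) → ℝ)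
    (e : Fin (ℓ + 1) → Fin k) (j : Fin (ℓ + 1)) : Fin (k + 1) :=
  if j = 0 then 0
  else if j = Fin.last ℓ then Fin.last k
  else if P (t (j + 1)) < P (t j) then upperEnd u (e j) else upperEnd (-u) (e j)

lemma abs_sub_visitIdx_le (hsig : SignatureData δ P ℓ t) {f g : I → I}
    (hm : IsFrechetMatching δ P (polyCurve k u) f g) {s : Fin (ℓ + 1) → I} (hs : ∀ j, f (s j) = t j) {e : Fin (ℓ + 1) → Fin k}
    (he : ∀ j, g (s j) ∈ edge (e j)) (j : Fin (ℓ + 1)) :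
    |P (t j) - u (visitIdx P t u e j)| ≤ δ := by
  unfold visitIdx
  split_ifs with h0 hl hup
  · have := hm.abs_sub_le 0
    rwa [hm.map_zero.1, hm.map_zero.2, polyCurve_apply_zero, ← hsig.2.1, ← h0] at this
  · have := hm.abs_sub_le 1
    rwa [hm.map_one.1, hm.map_one.2, polyCurve_apply_one, ← hsig.2.2.1, ← hl] at this
  · rcases hsig.isDominantMax_or h0 hl with ⟨_, hmax⟩ | ⟨hlt, _⟩
    · rw [← hs j] at hmax ⊢
      exact abs_sub_upperEnd_le hm (he j) hmax
    · exact absurd hup (lt_asymm hlt)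
  · rcases hsig.isDominantMax_or h0 hl with ⟨hlt, _⟩ | ⟨_, hmax⟩
    · exact absurd hlt hup
    · rw [← hs j] at hmax ⊢
      have hm' := hm.neg
      rw [← polyCurve_neg] at hm'
      have := abs_sub_upperEnd_le hm' (he j) hmax
      rwa [Pi.neg_apply, Pi.neg_apply, neg_sub_neg, abs_sub_comm] at this

lemma monotone_visitIdx (hsig : SignatureData δ P ℓ t) {w : Fin (ℓ + 1) → I} (hw : Monotone w)
    {e : Fin (ℓ + 1) → Fin k} (he : Monotone e) (hwe : ∀ j, w j ∈ edge (e j))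
    (hpw : ∀ j, |P (t j) - polyCurve k u (w j)| ≤ δ) : Monotone (visitIdx P t u e) := by
  refine Fin.monotone_iff_le_succ.2 fun i => ?_
  by_cases ha : i.castSucc = 0
  · simp only [visitIdx, ha, if_true, Fin.zero_le]
  by_cases hb : i.succ = Fin.last ℓ
  · rw [hb]
    conv_rhs => rw [visitIdx, if_neg (hb ▸ Fin.succ_ne_zero i), if_pos rfl]
    exact Fin.le_last _
  have hab : i.castSucc + 1 = i.succ := Fin.coeSucc_eq_succ
  have hba : i.succ - 1 = i.castSucc := by rw [← hab, add_sub_cancel_right]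
  simp only [visitIdx, ha, hb, Fin.succ_ne_zero, (Fin.castSucc_lt_last i).ne, if_false, hab]
  rcases (he (Fin.castSucc_le_succ i)).lt_or_eq with hlt | heq
  · have hle : (e i.castSucc).succ ≤ (e i.succ).castSucc := Fin.succ_le_castSucc_iff.2 hlt
    split_ifs <;> exact (upperEnd_le_succ _ _).trans (hle.trans (castSucc_le_upperEnd _ _))
  have hgap := hsig.two_mul_lt_abs (a := i.castSucc) (b := i.succ) rfl ha hb
  have hwb : w i.succ ∈ edge (e i.castSucc) := heq ▸ hwe i.succ
  have hww := hw (Fin.castSucc_le_succ i)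
  rw [← heq]
  rcases hsig.isMaxOn_or_isMinOn (Fin.succ_ne_zero i) hb with ⟨hp, hn, -⟩ | ⟨hp, hn, -⟩ <;>
    rw [hba] at hp
  · rw [if_neg (lt_asymm hp), if_pos hn]
    rw [abs_of_pos (by linarith)] at hgap
    have hpw' : ∀ j, |-P (t j) - polyCurve k (-u) (w j)| ≤ δ := fun j => by
      rw [polyCurve_neg, Pi.neg_apply, neg_sub_neg, abs_sub_comm]
      exact hpw j
    simpa using upperEnd_le_upperEnd_neg (hwe _) hwb hww (hpw' _) (hpw' _) (by linarith)
  · rw [if_pos hp, if_neg (lt_asymm hn)]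
    rw [abs_of_neg (by linarith)] at hgap
    exact upperEnd_le_upperEnd_neg (hwe _) hwb hww (hpw _) (hpw _) (by linarith)

namespace SignatureData

theorem exists_visiting_order_of_isFrechetMatching (hsig : SignatureData δ P ℓ t) {f g : I → I} (hm : IsFrechetMatching δ P (polyCurve k u) f g) :
    ∃ idx : Fin (ℓ + 1) → Fin (k + 1), Monotone idx ∧ ∀ j, |P (t j) - u (idx j)| ≤ δ := by
  choose s hs using fun j => hm.surjective_left (t j)
  have hsm : Monotone s := by
    intro a b hab
    rcases hab.lt_or_eq with hlt | rfl
    · exact (hm.monotone_left.reflect_lt (by rw [hs, hs]; exact hsig.1 hlt)).le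
    · exact le_rfl
  rcases Nat.eq_zero_or_pos k with rfl | hk
  · refine ⟨0, monotone_const, fun j => ?_⟩
    simpa [hs, polyCurve_zero] using hm.abs_sub_le (s j)
  have : NeZero k := .of_pos hk
  have hw : Monotone (g ∘ s) := hm.monotone_right.comp hsm
  exact ⟨visitIdx P t u (edgeOf ∘ g ∘ s),
    monotone_visitIdx hsig hw (monotone_edgeOf.comp hw) (fun _ => mem_edge_edgeOf _)
      (fun j => hs j ▸ hm.abs_sub_le (s j)),
    abs_sub_visitIdx_le hsig hm hs (fun _ => mem_edge_edgeOf _)⟩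

lemma eventually_nhdsGT (hsig : SignatureData δ P ℓ t) :
    ∀ᶠ δ' in 𝓝[>] δ, SignatureData δ' P ℓ t := by
  obtain ⟨hmono, h0, h1, hloc, hext, hend, hgap⟩ := hsig
  have hend' : ∀ᶠ δ' in 𝓝 δ, ∀ hℓ : 1 ≤ ℓ,
      δ' < |P (t ⟨1, by omega⟩) - P (t 0)| ∧
      δ' < |P (t (Fin.last ℓ)) - P (t ⟨ℓ - 1, by omega⟩)| := by
    by_cases hℓ : 1 ≤ ℓ
    · filter_upwards [eventually_lt_nhds (hend hℓ).1, eventually_lt_nhds (hend hℓ).2]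
        with δ' h1 h2 _ using ⟨h1, h2⟩
    · exact .of_forall fun _ h => absurd h hℓ
  have hgap' : ∀ᶠ δ' in 𝓝 δ, ∀ j (h1 : 1 ≤ j) (h2 : j + 2 ≤ ℓ),
      2 * δ' < |P (t ⟨j + 1, by omega⟩) - P (t ⟨j, by omega⟩)| := by
    have := (finite_Iio ℓ).eventually_all (l := 𝓝 δ) (p := fun j δ' => ∀ (h1 : 1 ≤ j)
      (h2 : j + 2 ≤ ℓ), 2 * δ' < |P (t ⟨j + 1, by omega⟩) - P (t ⟨j, by omega⟩)|)
    refine (this.2 fun j _ => ?_).mono fun δ' h j h1 h2 => h j (by simp; omega) h1 h2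
    by_cases hj : 1 ≤ j ∧ j + 2 ≤ ℓ
    · filter_upwards [eventually_lt_nhds (show δ < |P (t ⟨j + 1, by omega⟩) -
        P (t ⟨j, by omega⟩)| / 2 by linarith [hgap j hj.1 hj.2])] with δ' hδ' _ _
      linarith
    · exact .of_forall fun _ h1 h2 => absurd ⟨h1, h2⟩ hj
  filter_upwards [self_mem_nhdsWithin, nhdsWithin_le_nhds hend', nhdsWithin_le_nhds hgap']
    with δ' hδ' hend'' hgap''
  exact ⟨hmono, h0, h1, fun i => (hloc i).trans (le_of_lt hδ'), hext, hend'', hgap''⟩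

end SignatureData

end Visit

lemma exists_forall_le_of_eventually_nhdsGT {α ι : Type*} [Finite α] {p : α → Prop}
    {F : α → ι → ℝ} {δ : ℝ} (h : ∀ᶠ δ' in 𝓝[>] δ, ∃ a, p a ∧ ∀ i, F a i ≤ δ') :
    ∃ a, p a ∧ ∀ i, F a i ≤ δ := by
  obtain ⟨a, ha⟩ := frequently_exists.1 h.frequently
  obtain ⟨_, hpa, -⟩ := ha.exists
  exact ⟨a, hpa, fun i => isClosed_Ici.mem_of_frequently_of_tendsto (ha.mono fun _ h => h.2 i)
    (tendsto_nhdsWithin_of_tendsto_nhds tendsto_id)⟩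

theorem exists_visiting_order_of_signature_general (δ : ℝ)
    (k : ℕ) (u : Fin (k + 1) → ℝ)
    (P : unitInterval → ℝ) (hPc : Continuous P)
    (h : frechetDist P (polyCurve k u) ≤ δ)
    (ℓ : ℕ) (t : Fin (ℓ + 1) → unitInterval) (hsig : SignatureData δ P ℓ t) :
    ∃ idx : Fin (ℓ + 1) → Fin (k + 1),
      Monotone idx ∧ ∀ j : Fin (ℓ + 1), |P (t j) - u (idx j)| ≤ δ := by
  refine exists_forall_le_of_eventually_nhdsGT (p := Monotone)
    (F := fun idx j => |P (t j) - u (idx j)|) ?_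
  filter_upwards [hsig.eventually_nhdsGT, self_mem_nhdsWithin] with δ' hsig' hδ'
  obtain ⟨f, g, hm⟩ := exists_isFrechetMatching_of_frechetDist_lt
    (isCompact_range hPc).isBounded (isBounded_range_polyCurve u) (h.trans_lt hδ')
  exact hsig'.exists_visiting_order_of_isFrechetMatching hm

/-- If `d_F(P, Q) ≤ δ` and `P'` is a `δ`-signature of `P` (given by
parameters `t`), then there is a `δ`-visiting order of the vertices of `P'` on the
vertices of the polygonal curve `Q`. -/
theorem exists_visiting_order_of_signature (δ : ℝ) (hδ : 0 < δ)
    (k : ℕ) (u : Fin (k + 1) → ℝ)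
    (P : unitInterval → ℝ) (hPc : Continuous P)
    (h : frechetDist P (polyCurve k u) ≤ δ)
    (ℓ : ℕ) (t : Fin (ℓ + 1) → unitInterval) (hsig : SignatureData δ P ℓ t) :
    ∃ idx : Fin (ℓ + 1) → Fin (k + 1),
      Monotone idx ∧ ∀ j : Fin (ℓ + 1), |P (t j) - u (idx j)| ≤ δ :=
  exists_visiting_order_of_signature_general δ k u P hPc h ℓ t hsig
end

section
/- Let P, Q : [0,1] → R be polygonal curves with d_F(Q, P) ≤ δ, realized by a monotone traversal φ. If no inner vertex of P δ-visits an inner vertex of Q under φ (and vice versa), then both P and Q are 2δ-monotone. -/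
/-!
If `P` is not `2δ`-monotone it has a valley or a peak of depth more than `2δ`; negating both
curves turns a peak into a valley, so let `u < v < w` with `P v` the minimum of `P` on `[u, w]`
and `P v + 2δ < P u, P w`. The traversal matches `u, v, w` with points of `Q` at which `Q` exceeds
`P v + δ`, is at most `P v + δ`, and exceeds `P v + δ` again, so the lowest point of `Q` between the
outer two is an inner vertex `j` with `q j ≤ P v + δ`. The point of `P` matched with `j` lies in
`[u, w]` and below `q j + δ ≤ P v + 2δ`; the lower endpoint `b` of its edge (or the point itself,
if it is a vertex) then lies strictly inside `(u, w)`, and `P v ≤ p b ≤ q j + δ` shows that `j`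
`δ`-visits the inner vertex `b`.
-/

open Set unitInterval

lemma polyCurve_of_mem_edge {m : ℕ} (p : Fin (m + 1) → ℝ) (i : Fin m) {t : I}
    (hit : (i : ℝ) ≤ t * m) (hti : (t : ℝ) * m ≤ i + 1) :
    polyCurve m p t = p i.castSucc + ((t : ℝ) * m - i) * (p i.succ - p i.castSucc) := by
  obtain ⟨i, hi⟩ := i
  simp only [Fin.castSucc_mk, Fin.succ_mk] at hit hti ⊢
  rcases hti.lt_or_eq with hlt | heq
  · have hfloor : ⌊(t : ℝ) * m⌋₊ = i := by
      rw [Nat.floor_eq_iff ((Nat.cast_nonneg i).trans hit)]; exact ⟨hit, hlt⟩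
    simp only [polyCurve, smul_eq_mul, hfloor, show min i (m - 1) = i by omega,
      show min i m = i by omega, show min (i + 1) m = i + 1 by omega]
    ring
  · have hfloor : ⌊(t : ℝ) * m⌋₊ = i + 1 := by
      rw [heq]; exact_mod_cast Nat.floor_natCast (i + 1)
    rcases (Nat.succ_le_of_lt hi).lt_or_eq with hlt | hlast
    · simp only [polyCurve, smul_eq_mul, hfloor, show min (i + 1) (m - 1) = i + 1 by omega,
        show min (i + 1) m = i + 1 by omega, show min (i + 1 + 1) m = i + 1 + 1 by omega]
      push_cast
      simp only [heq]; ring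
    · simp only [polyCurve, smul_eq_mul, hfloor, show min (i + 1) (m - 1) = i by omega,
        show min i m = i by omega, show min (i + 1) m = i + 1 by omega]
      simp only [heq]; ring

lemma coe_vparam_mul {m : ℕ} (hm : 0 < m) (b : Fin (m + 1)) : (vparam m b : ℝ) * m = b :=
  div_mul_cancel₀ _ (Nat.cast_ne_zero.mpr hm.ne')

lemma polyCurve_vparam_s14 {m : ℕ} (hm : 0 < m) (p : Fin (m + 1) → ℝ) (b : Fin (m + 1)) :
    polyCurve m p (vparam m b) = p b := by
  have hb := coe_vparam_mul hm b
  rcases (Nat.lt_succ_iff.mp b.isLt).lt_or_eq with hlt | hlast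
  · rw [polyCurve_of_mem_edge p ⟨b, hlt⟩ hb.ge (by simp [hb]), hb]
    simp
  · have hedge : ((⟨m - 1, by omega⟩ : Fin m) : ℝ) = b - 1 := by
      simp [hlast, Nat.cast_sub hm]
    rw [polyCurve_of_mem_edge p ⟨m - 1, by omega⟩ (by simp only [hedge, hb]; linarith)
      (by simp only [hedge, hb]; linarith), hb, hedge]
    have : (⟨m - 1, by omega⟩ : Fin m).succ = b := Fin.ext (by simp; omega)
    rw [this]; ring

lemma exists_mem_edge {m : ℕ} (hm : 0 < m) (t : I) :
    ∃ i : Fin m, (i : ℝ) ≤ t * m ∧ (t : ℝ) * m ≤ i + 1 := by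
  have htm : 0 ≤ (t : ℝ) * m := mul_nonneg t.2.1 (Nat.cast_nonneg m)
  rcases lt_or_ge ⌊(t : ℝ) * m⌋₊ m with hlt | hge
  · exact ⟨⟨_, hlt⟩, Nat.floor_le htm, (Nat.lt_floor_add_one _).le⟩
  · refine ⟨⟨m - 1, by omega⟩, ?_, ?_⟩
    · calc (((m - 1 : ℕ)) : ℝ) ≤ ⌊(t : ℝ) * m⌋₊ := by exact_mod_cast (Nat.sub_le m 1).trans hge
        _ ≤ t * m := Nat.floor_le htm
    · simp only [Nat.cast_sub hm, Nat.cast_one, sub_add_cancel]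
      exact mul_le_of_le_one_left (Nat.cast_nonneg m) t.2.2

lemma vparam_le_iff {m : ℕ} (hm : 0 < m) {b : Fin (m + 1)} {s : I} :
    vparam m b ≤ s ↔ (b : ℝ) ≤ s * m := by
  rw [← Subtype.coe_le_coe, ← coe_vparam_mul hm b]
  exact (mul_le_mul_iff_left₀ (Nat.cast_pos.mpr hm)).symm

lemma le_vparam_iff {m : ℕ} (hm : 0 < m) {b : Fin (m + 1)} {s : I} :
    s ≤ vparam m b ↔ (s : ℝ) * m ≤ b := by
  rw [← Subtype.coe_le_coe, ← coe_vparam_mul hm b]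
  exact (mul_le_mul_iff_left₀ (Nat.cast_pos.mpr hm)).symm

lemma coe_mul_le_coe_mul {s x : I} (h : s ≤ x) (m : ℕ) : (s : ℝ) * m ≤ x * m :=
  mul_le_mul_of_nonneg_right (Subtype.coe_le_coe.mpr h) (Nat.cast_nonneg m)

lemma polyCurve_le_of_mem_edge {m : ℕ} (p : Fin (m + 1) → ℝ) (i : Fin m) {s x : I}
    (hs : (i : ℝ) ≤ s * m ∧ (s : ℝ) * m ≤ i + 1) (hx : (i : ℝ) ≤ x * m ∧ (x : ℝ) * m ≤ i + 1)
    (h : ((s : ℝ) * m - x * m) * (p i.succ - p i.castSucc) ≤ 0) :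
    polyCurve m p s ≤ polyCurve m p x := by
  rw [polyCurve_of_mem_edge p i hs.1 hs.2, polyCurve_of_mem_edge p i hx.1 hx.2]
  linarith

-- `b` is the lower endpoint of the edge through `x`, or `x` itself when `x` is a vertex.
lemma exists_vertex_star_le {m : ℕ} (hm : 0 < m) (p : Fin (m + 1) → ℝ) (x : I) :
    ∃ b : Fin (m + 1), |(x : ℝ) * m - b| < 1 ∧
      ∀ s ∈ uIcc (vparam m b) x, polyCurve m p s ≤ polyCurve m p x := by
  obtain ⟨i, hix, hxi⟩ := exists_mem_edge hm x
  have hvert : ∀ b : Fin (m + 1), (x : ℝ) * m = b →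
      |(x : ℝ) * m - b| < 1 ∧ ∀ s ∈ uIcc (vparam m b) x, polyCurve m p s ≤ polyCurve m p x := by
    intro b hb
    have hbx : vparam m b = x :=
      le_antisymm ((vparam_le_iff hm).mpr hb.ge) ((le_vparam_iff hm).mpr hb.le)
    simp [hbx, hb]
  rcases le_total (p i.castSucc) (p i.succ) with hle | hle
  · rcases hxi.lt_or_eq with hlt | heq
    · refine ⟨i.castSucc, by rw [abs_lt]; simp only [Fin.val_castSucc]; constructor <;> linarith,
        fun s hs => ?_⟩
      rw [uIcc_of_le ((vparam_le_iff hm).mpr (by simpa using hix))] at hs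
      have hsx := coe_mul_le_coe_mul hs.2 m
      have hvs := (vparam_le_iff hm).mp hs.1
      simp only [Fin.val_castSucc] at hvs
      exact polyCurve_le_of_mem_edge p i ⟨hvs, by linarith⟩ ⟨hix, hxi⟩
        (mul_nonpos_of_nonpos_of_nonneg (by linarith) (sub_nonneg.mpr hle))
    · exact ⟨i.succ, hvert _ (by simpa using heq)⟩
  · rcases hix.lt_or_eq with hlt | heq
    · refine ⟨i.succ, by rw [abs_lt]; simp only [Fin.val_succ]; push_cast; constructor <;> linarith,
        fun s hs => ?_⟩
      rw [uIcc_of_ge ((le_vparam_iff hm).mpr (by simpa using hxi))] at hs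
      have hxs := coe_mul_le_coe_mul hs.1 m
      have hsv := (le_vparam_iff hm).mp hs.2
      simp only [Fin.val_succ, Nat.cast_add, Nat.cast_one] at hsv
      exact polyCurve_le_of_mem_edge p i ⟨by linarith, hsv⟩ ⟨hix, hxi⟩
        (mul_nonpos_of_nonneg_of_nonpos (by linarith) (sub_nonpos.mpr hle))
    · exact ⟨i.castSucc, hvert _ (by simpa using heq.symm)⟩

lemma exists_vertex_between_star_le {m : ℕ} (hm : 0 < m) (p : Fin (m + 1) → ℝ) {α x β : I}
    (hαx : α ≤ x) (hxβ : x ≤ β) (hα : polyCurve m p x < polyCurve m p α)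
    (hβ : polyCurve m p x < polyCurve m p β) :
    ∃ b : Fin (m + 1), α < vparam m b ∧ vparam m b < β ∧ |(x : ℝ) * m - b| < 1 ∧
      p b ≤ polyCurve m p x := by
  obtain ⟨b, hstar, hle⟩ := exists_vertex_star_le hm p x
  refine ⟨b, lt_of_not_ge fun h => ?_, lt_of_not_ge fun h => ?_, hstar, ?_⟩
  · exact hα.not_ge (hle α (mem_uIcc.mpr (.inl ⟨h, hαx⟩)))
  · exact hβ.not_ge (hle β (mem_uIcc.mpr (.inr ⟨hxβ, h⟩)))
  · simpa only [polyCurve_vparam_s14 hm] using hle _ left_mem_uIcc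

lemma pos_of_lt_vparam {m : ℕ} (hm : 0 < m) {b : Fin (m + 1)} {α : I} (h : α < vparam m b) :
    0 < (b : ℕ) := by
  have hαb : (α : ℝ) * m < b := not_le.mp ((vparam_le_iff hm).not.mp h.not_ge)
  exact_mod_cast (mul_nonneg α.2.1 (Nat.cast_nonneg m)).trans_lt hαb

lemma lt_of_vparam_lt {m : ℕ} (hm : 0 < m) {b : Fin (m + 1)} {β : I} (h : vparam m b < β) :
    (b : ℕ) < m := by
  have hbβ : (b : ℝ) < β * m := not_le.mp ((le_vparam_iff hm).not.mp h.not_ge)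
  exact_mod_cast hbβ.trans_le (mul_le_of_le_one_left (Nat.cast_nonneg m) β.2.2)

lemma exists_isMinOn_polyCurve {m : ℕ} (hm : 0 < m) (p : Fin (m + 1) → ℝ) {α β : I}
    (hαβ : α ≤ β) : ∃ v ∈ Icc α β, IsMinOn (polyCurve m p) (Icc α β) v := by
  set T := Icc α β ∩ insert α (insert β (range (vparam m)))
  have hT : T.Finite := ((finite_range _).insert _ |>.insert _).inter_of_right _
  obtain ⟨v, hvT, hv⟩ := exists_min_image T (polyCurve m p) hT ⟨α, ⟨le_rfl, hαβ⟩, .inl rfl⟩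
  refine ⟨v, hvT.1, fun s hs => ?_⟩
  obtain ⟨b, -, hle⟩ := exists_vertex_star_le hm p s
  rcases lt_or_ge (vparam m b) α with hbα | hαb
  · exact (hv α ⟨⟨le_rfl, hαβ⟩, .inl rfl⟩).trans (hle α (mem_uIcc.mpr (.inl ⟨hbα.le, hs.1⟩)))
  rcases le_or_gt (vparam m b) β with hbβ | hβb
  · exact (hv _ ⟨⟨hαb, hbβ⟩, .inr (.inr ⟨b, rfl⟩)⟩).trans (hle _ left_mem_uIcc)
  · exact (hv β ⟨⟨hαβ, le_rfl⟩, .inr (.inl rfl)⟩).trans (hle β (mem_uIcc.mpr (.inr ⟨hs.2, hβb.le⟩)))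

lemma polyCurve_neg (m : ℕ) (p : Fin (m + 1) → ℝ) : polyCurve m (-p) = -polyCurve m p := by
  ext t
  simp only [polyCurve, smul_eq_mul, Pi.neg_apply]
  ring

lemma exists_isMaxOn_polyCurve {m : ℕ} (hm : 0 < m) (p : Fin (m + 1) → ℝ) {α β : I}
    (hαβ : α ≤ β) : ∃ v ∈ Icc α β, IsMaxOn (polyCurve m p) (Icc α β) v := by
  obtain ⟨v, hv, hmin⟩ := exists_isMinOn_polyCurve hm (-p) hαβ
  refine ⟨v, hv, ?_⟩
  simpa only [polyCurve_neg, Pi.neg_apply, neg_neg] using hmin.neg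

def HasValley (c : ℝ) (P : I → ℝ) : Prop :=
  ∃ u v w : I, u ≤ v ∧ v ≤ w ∧ P v + c < P u ∧ P v + c < P w ∧ IsMinOn P (Icc u w) v

lemma hasValley_or_hasValley_neg {c : ℝ} {P : I → ℝ}
    (hmin : ∀ α β : I, α ≤ β → ∃ v ∈ Icc α β, IsMinOn P (Icc α β) v)
    (hmax : ∀ α β : I, α ≤ β → ∃ v ∈ Icc α β, IsMaxOn P (Icc α β) v)
    (hP : ¬ ApproxMono c P) : HasValley c P ∨ HasValley c (-P) := by
  simp only [ApproxMono, ApproxInc, ApproxDec, not_or, not_forall, not_le] at hP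
  obtain ⟨⟨s₁, t₁, hst₁, hdrop⟩, ⟨s₂, t₂, hst₂, hrise⟩⟩ := hP
  obtain ⟨u, ⟨-, hut₁⟩, hu⟩ := hmax 0 t₁ nonneg'
  obtain ⟨v, ⟨huv, -⟩, hv⟩ := hmin u 1 le_one'
  have hvu : P v + c < P u := by
    have hvt₁ : P v ≤ P t₁ := hv ⟨hut₁, le_one'⟩
    have hs₁u : P s₁ ≤ P u := hu ⟨nonneg', hst₁⟩
    linarith
  by_cases hclimb : ∃ w, v ≤ w ∧ P v + c < P w
  · obtain ⟨w, hvw, hw⟩ := hclimb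
    exact .inl ⟨u, v, w, huv, hvw, hvu, hw, hv.on_subset (Icc_subset_Icc_right le_one')⟩
  simp only [not_exists, not_and, not_lt] at hclimb
  right
  rcases lt_or_ge t₂ v with ht₂v | hvt₂
  · obtain ⟨ν, ⟨hs₂ν, hνv⟩, hν⟩ := hmax s₂ v (hst₂.trans ht₂v.le)
    have hνt₂ : P t₂ ≤ P ν := hν ⟨hst₂, ht₂v.le⟩
    have hνv' : P v + c < P ν := by
      rcases le_total u s₂ with hus₂ | hs₂u
      · have : P v ≤ P s₂ := hv ⟨hus₂, le_one'⟩
        linarith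
      · have : P u ≤ P ν := hν ⟨hs₂u, huv⟩
        linarith
    refine ⟨s₂, ν, v, hs₂ν, hνv, ?_, ?_, hν.neg⟩ <;> simp only [Pi.neg_apply] <;> linarith
  · have hs₂u : s₂ < u := lt_of_not_ge fun hus₂ => by
      have : P v ≤ P s₂ := hv ⟨hus₂, le_one'⟩
      linarith [hclimb t₂ hvt₂]
    obtain ⟨ν, ⟨hs₂ν, hνt₁⟩, hν⟩ := hmax s₂ t₁ (hs₂u.le.trans hut₁)
    have hνu : P u ≤ P ν := hν ⟨hs₂u.le, hut₁⟩
    have hs₂v : P s₂ < P v := by linarith [hclimb t₂ hvt₂]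
    refine ⟨s₂, ν, t₁, hs₂ν, hνt₁, ?_, ?_, hν.neg⟩ <;> simp only [Pi.neg_apply]
    · linarith
    · have : P s₁ ≤ P u := hu ⟨nonneg', hst₁⟩
      linarith

def NoInnerVisits (δ : ℝ) (m k : ℕ) (p : Fin (m + 1) → ℝ) (q : Fin (k + 1) → ℝ)
    (f g : I → I) : Prop :=
  ∀ (j : Fin (k + 1)) (a : Fin (m + 1)),
    0 < (j : ℕ) → (j : ℕ) < k → 0 < (a : ℕ) → (a : ℕ) < m → ¬ Visits δ m k p q f g j a

lemma NoInnerVisits.neg {δ : ℝ} {m k : ℕ} {p : Fin (m + 1) → ℝ} {q : Fin (k + 1) → ℝ}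
    {f g : I → I} (h : NoInnerVisits δ m k p q f g) : NoInnerVisits δ m k (-p) (-q) f g :=
  fun j a hj hjk ha ham hv => h j a hj hjk ha ham
    ⟨by simpa only [Pi.neg_apply, neg_sub_neg, abs_sub_comm] using hv.1, hv.2⟩

lemma NoInnerVisits.swap {δ : ℝ} {m k : ℕ} {p : Fin (m + 1) → ℝ} {q : Fin (k + 1) → ℝ}
    {f g : I → I} (h : NoInnerVisits δ m k p q f g) : NoInnerVisits δ k m q p g f :=
  fun a j ha ham hj hjk hv => h j a hj hjk ha ham ⟨abs_sub_comm (p a) (q j) ▸ hv.1, hv.2.symm⟩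

lemma not_hasValley_of_noInnerVisits {δ : ℝ} {m k : ℕ} (hm : 0 < m) (hk : 0 < k)
    {p : Fin (m + 1) → ℝ} {q : Fin (k + 1) → ℝ} {f g : I → I}
    (hfm : Monotone f) (hgm : Monotone g) (hfs : Function.Surjective f)
    (hgs : Function.Surjective g)
    (hreal : ∀ t, |polyCurve m p (f t) - polyCurve k q (g t)| ≤ δ)
    (hnv : NoInnerVisits δ m k p q f g) : ¬ HasValley (2 * δ) (polyCurve m p) := by
  rintro ⟨u, v, w, huv, hvw, hvu, hvw', hmin⟩
  have hclose : ∀ t, polyCurve m p (f t) - δ ≤ polyCurve k q (g t) ∧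
      polyCurve k q (g t) ≤ polyCurve m p (f t) + δ := fun t => by
    have := abs_sub_le_iff.mp (hreal t); constructor <;> linarith
  have hδ : 0 ≤ δ := (abs_nonneg _).trans (hreal 0)
  obtain ⟨τu, rfl⟩ := hfs u
  obtain ⟨τv, rfl⟩ := hfs v
  obtain ⟨τw, rfl⟩ := hfs w
  have huv' : τu < τv := hfm.reflect_lt (huv.lt_of_ne fun h => by rw [h] at hvu; linarith)
  have hvw'' : τv < τw := hfm.reflect_lt (hvw.lt_of_ne fun h => by rw [h] at hvw'; linarith)
  obtain ⟨j, huj, hjw, -, hqj⟩ := exists_vertex_between_star_le hk q (hgm huv'.le) (hgm hvw''.le)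
    (by linarith [hclose τu, hclose τv]) (by linarith [hclose τv, hclose τw])
  obtain ⟨τj, hτj⟩ := hgs (vparam k j)
  have huτj : τu < τj := hgm.reflect_lt (hτj ▸ huj)
  have hτjw : τj < τw := hgm.reflect_lt (hτj ▸ hjw)
  have hPτj : polyCurve m p (f τj) ≤ q j + δ := by
    have := (hclose τj).1; rw [hτj, polyCurve_vparam_s14 hk] at this; linarith
  obtain ⟨b, hub, hbw, hstar, hpb⟩ := exists_vertex_between_star_le hm p (hfm huτj.le)
    (hfm hτjw.le) (by linarith [hclose τv]) (by linarith [hclose τv])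
  have hvb : polyCurve m p (f τv) ≤ p b := polyCurve_vparam_s14 hm p b ▸ hmin ⟨hub.le, hbw.le⟩
  refine hnv j b (pos_of_lt_vparam hk huj) (lt_of_vparam_lt hk hjw) (pos_of_lt_vparam hm hub)
    (lt_of_vparam_lt hm hbw) ⟨abs_sub_le_iff.mpr ⟨?_, ?_⟩, .inl ⟨τj, hτj, hstar⟩⟩
  · linarith [hclose τv]
  · linarith

lemma approxMono_polyCurve_of_noInnerVisits {δ : ℝ} {m k : ℕ} (hm : 0 < m) (hk : 0 < k)
    {p : Fin (m + 1) → ℝ} {q : Fin (k + 1) → ℝ} {f g : I → I}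
    (hfm : Monotone f) (hgm : Monotone g) (hfs : Function.Surjective f)
    (hgs : Function.Surjective g)
    (hreal : ∀ t, |polyCurve m p (f t) - polyCurve k q (g t)| ≤ δ)
    (hnv : NoInnerVisits δ m k p q f g) : ApproxMono (2 * δ) (polyCurve m p) := by
  by_contra hP
  rcases hasValley_or_hasValley_neg (fun _ _ => exists_isMinOn_polyCurve hm p)
    (fun _ _ => exists_isMaxOn_polyCurve hm p) hP with hval | hval
  · exact not_hasValley_of_noInnerVisits hm hk hfm hgm hfs hgs hreal hnv hval
  · rw [← polyCurve_neg] at hval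
    refine not_hasValley_of_noInnerVisits hm hk hfm hgm hfs hgs (fun t => ?_) hnv.neg hval
    simpa only [polyCurve_neg, Pi.neg_apply, neg_sub_neg, abs_sub_comm] using hreal t

theorem approxMono_of_no_inner_visits_general (δ : ℝ)
    (m k : ℕ) (hm : 0 < m) (hk : 0 < k)
    (p : Fin (m + 1) → ℝ) (q : Fin (k + 1) → ℝ)
    (f g : unitInterval → unitInterval)
    (hfm : Monotone f) (hgm : Monotone g)
    (hfs : Function.Surjective f) (hgs : Function.Surjective g)
    (hreal : ∀ t : unitInterval, |polyCurve m p (f t) - polyCurve k q (g t)| ≤ δ)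
    (hnv : ∀ (j : Fin (k + 1)) (a : Fin (m + 1)),
      0 < (j : ℕ) → (j : ℕ) < k → 0 < (a : ℕ) → (a : ℕ) < m →
        ¬ Visits δ m k p q f g j a) :
    ApproxMono (2 * δ) (polyCurve m p) ∧ ApproxMono (2 * δ) (polyCurve k q) :=
  ⟨approxMono_polyCurve_of_noInnerVisits hm hk hfm hgm hfs hgs hreal hnv,
    approxMono_polyCurve_of_noInnerVisits hk hm hgm hfm hgs hfs
      (fun t => abs_sub_comm (polyCurve m p (f t)) _ ▸ hreal t) (NoInnerVisits.swap hnv)⟩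

/-- If a monotone traversal realizes distance `δ` between the
polygonal curves on `p` and `q`, and no inner vertex of one curve `δ`-visits an
inner vertex of the other under the traversal, then both curves are
`2δ`-monotone. -/
theorem approxMono_of_no_inner_visits (δ : ℝ) (hδ : 0 < δ)
    (m k : ℕ) (hm : 0 < m) (hk : 0 < k)
    (p : Fin (m + 1) → ℝ) (q : Fin (k + 1) → ℝ)
    (f g : unitInterval → unitInterval)
    (hfc : Continuous f) (hgc : Continuous g)
    (hfm : Monotone f) (hgm : Monotone g)
    (hfs : Function.Surjective f) (hgs : Function.Surjective g)
    (hreal : ∀ t : unitInterval, |polyCurve m p (f t) - polyCurve k q (g t)| ≤ δ)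
    (hnv : ∀ (j : Fin (k + 1)) (a : Fin (m + 1)),
      0 < (j : ℕ) → (j : ℕ) < k → 0 < (a : ℕ) → (a : ℕ) < m →
        ¬ Visits δ m k p q f g j a) :
    ApproxMono (2 * δ) (polyCurve m p) ∧ ApproxMono (2 * δ) (polyCurve k q) :=
  approxMono_of_no_inner_visits_general δ m k hm hk p q f g hfm hgm hfs hgs hreal hnv
end

section
/- Fix integers d, k ≥ 1 with k dividing d, and let d' = k · 2^{d/k}. Define a map φ_A : {0,1}^d → {0,1}^{d'} by: partition a into k blocks a_0, …, a_{k−1} of length d/k; letting â_i ∈ {0,…,2^{d/k}−1} denote block a_i read as a binary number, set φ_A(a)[i · 2^{d/k} + â_i] = 1 for each i and all other entries to 0. Define φ_B : {0,1}^d → {0,1}^{d'} by: with the same block partition b_0, …, b_{k−1} of b, set φ_B(b)[i · 2^{d/k} + β̂] = 1 for every i and every β ∈ {0,1}^{d/k} with ⟨b_i, β⟩ > 0, and all other entries to 0. Then for all a, b ∈ {0,1}^d: ⟨a, b⟩ = 0 if and only if ⟨φ_A(a), φ_B(b)⟩ = 0. Moreover, φ_A(a) has exactly k nonzero entries. -/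
/-- The number `â_i` whose binary representation is the `i`-th length-`c` block of
the 0/1 vector `a`. -/
def hatBlock (c : ℕ) (a : ℕ → Bool) (i : ℕ) : ℕ :=
  ∑ j ∈ Finset.range c, if a (i * c + j) then 2 ^ j else 0

/-- The sparse encoding `φ_A` of a vector `a ∈ {0,1}^{k·c}` into `{0,1}^{k·2^c}`:
position `i · 2^c + â_i` is set to 1 for each block `i`. -/
def encA (c k : ℕ) (a : ℕ → Bool) : ℕ → Bool := fun pos =>
  (List.range k).any fun i => pos == i * 2 ^ c + hatBlock c a i

/-- The encoding `φ_B` of a vector `b ∈ {0,1}^{k·c}` into `{0,1}^{k·2^c}`: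
position `i · 2^c + β̂` is set to 1 iff block `i` of `b` has a common 1 with the
pattern `β`. -/
def encB (c k : ℕ) (b : ℕ → Bool) : ℕ → Bool := fun pos =>
  (List.range k).any fun i =>
    (List.range (2 ^ c)).any fun β =>
      pos == i * 2 ^ c + β &&
        (List.range c).any fun j => b (i * c + j) && Nat.testBit β j

/-- Inner product (over ℕ) of two 0/1 vectors of length `d`. -/
def ip (d : ℕ) (a b : ℕ → Bool) : ℕ :=
  ∑ i ∈ Finset.range d, if a i && b i then 1 else 0

/-!
Write `m = 2 ^ c`. Position `i * m + r` with `r < m` determines its block `i` and offset `r`,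
so `φ_A(a)` meets `φ_B(b)` only inside a block `i`, at offset `â_i`, and there
`φ_B(b)` is set iff `b_i` has a common 1 with the pattern whose bits are `a_i`, i.e. with `a_i`
itself. Hence `⟨φ_A(a), φ_B(b)⟩ = 0` iff every block pair `a_i, b_i` is orthogonal, which is
`⟨a, b⟩ = 0`; and the `k` positions `i * m + â_i` are pairwise distinct.
-/

open Finset

lemma sum_range_ite_two_pow_lt (c : ℕ) (f : ℕ → Bool) :
    (∑ t ∈ range c, if f t then 2 ^ t else 0) < 2 ^ c := by
  induction c with
  | zero => simp
  | succ n ih =>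
    have : (if f n then 2 ^ n else 0) ≤ 2 ^ n := by split <;> simp
    rw [sum_range_succ, pow_succ]
    omega

lemma testBit_sum_range_ite_two_pow {c j : ℕ} (f : ℕ → Bool) (hj : j < c) :
    (∑ t ∈ range c, if f t then 2 ^ t else 0).testBit j = f j := by
  induction c with
  | zero => omega
  | succ n ih =>
    have hsplit : (∑ t ∈ range (n + 1), if f t then 2 ^ t else 0)
        = 2 ^ n * (f n).toNat + ∑ t ∈ range n, if f t then 2 ^ t else 0 := by
      rw [sum_range_succ, add_comm]
      cases f n <;> simp
    rw [hsplit, Nat.testBit_two_pow_mul_add _ (sum_range_ite_two_pow_lt n f)]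
    rcases Nat.lt_or_ge j n with hjn | hjn
    · simp [hjn, ih hjn]
    · obtain rfl : j = n := by omega
      cases f j <;> simp

lemma mul_add_lt_mul {i k m r : ℕ} (hi : i < k) (hr : r < m) : i * m + r < k * m :=
  calc i * m + r < (i + 1) * m := by rw [add_one_mul]; omega
    _ ≤ k * m := Nat.mul_le_mul_right m hi

lemma mul_add_inj {i i' m r r' : ℕ} (hr : r < m) (hr' : r' < m)
    (h : i * m + r = i' * m + r') : i = i' ∧ r = r' := by
  have hm : 0 < m := by omega
  have hdivmod {q s : ℕ} (hs : s < m) : (q * m + s) / m = q ∧ (q * m + s) % m = s :=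
    (Nat.div_mod_unique hm).2 ⟨by ring, hs⟩
  obtain ⟨hq, hs⟩ := hdivmod (q := i) hr
  obtain ⟨hq', hs'⟩ := hdivmod (q := i') hr'
  rw [h] at hq hs
  exact ⟨hq.symm.trans hq', hs.symm.trans hs'⟩

lemma forall_lt_mul_iff {k c : ℕ} {P : ℕ → Prop} :
    (∀ t < k * c, P t) ↔ ∀ i < k, ∀ j < c, P (i * c + j) := by
  refine ⟨fun h i hi j hj => h _ (mul_add_lt_mul hi hj), fun h t ht => ?_⟩
  have hc : 0 < c := Nat.pos_of_mul_pos_left (Nat.zero_lt_of_lt ht)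
  rw [← Nat.div_add_mod' t c]
  exact h _ ((Nat.div_lt_iff_lt_mul hc).2 ht) _ (Nat.mod_lt t hc)

lemma ip_eq_zero_iff {d : ℕ} {a b : ℕ → Bool} :
    ip d a b = 0 ↔ ∀ t < d, a t = true → b t = false := by
  simp [ip]

section Encodings

variable {c k : ℕ}

lemma hatBlock_lt (a : ℕ → Bool) (i : ℕ) : hatBlock c a i < 2 ^ c :=
  sum_range_ite_two_pow_lt c _

lemma testBit_hatBlock {i j : ℕ} (a : ℕ → Bool) (hj : j < c) :
    (hatBlock c a i).testBit j = a (i * c + j) :=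
  testBit_sum_range_ite_two_pow _ hj

lemma encA_eq_true_iff {a : ℕ → Bool} {pos : ℕ} :
    encA c k a pos = true ↔ ∃ i < k, pos = i * 2 ^ c + hatBlock c a i := by
  simp [encA]

lemma encB_mul_add_eq_true_iff {i β : ℕ} (b : ℕ → Bool) (hi : i < k) (hβ : β < 2 ^ c) :
    encB c k b (i * 2 ^ c + β) = true ↔ ∃ j < c, b (i * c + j) = true ∧ β.testBit j = true := by
  simp only [encB, List.any_eq_true, List.mem_range, Bool.and_eq_true, beq_iff_eq]
  constructor
  · rintro ⟨i', -, β', hβ', hpos, hbit⟩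
    obtain ⟨rfl, rfl⟩ := mul_add_inj hβ hβ' hpos
    exact hbit
  · exact fun hbit => ⟨i, hi, β, hβ, rfl, hbit⟩

lemma encB_hatBlock_eq_true_iff {i : ℕ} (a b : ℕ → Bool) (hi : i < k) :
    encB c k b (i * 2 ^ c + hatBlock c a i) = true ↔
      ∃ j < c, a (i * c + j) = true ∧ b (i * c + j) = true := by
  rw [encB_mul_add_eq_true_iff b hi (hatBlock_lt a i)]
  refine exists_congr fun j => and_congr_right fun hj => ?_
  rw [testBit_hatBlock a hj, and_comm]

lemma ip_encA_eq_zero_iff (a b : ℕ → Bool) :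
    ip (k * 2 ^ c) (encA c k a) b = 0 ↔ ∀ i < k, b (i * 2 ^ c + hatBlock c a i) = false := by
  simp only [ip_eq_zero_iff, encA_eq_true_iff]
  refine ⟨fun h i hi => h _ (mul_add_lt_mul hi (hatBlock_lt a i)) ⟨i, hi, rfl⟩, ?_⟩
  rintro h _ - ⟨i, hi, rfl⟩
  exact h i hi

lemma card_filter_encA (a : ℕ → Bool) :
    #{pos ∈ range (k * 2 ^ c) | encA c k a pos = true} = k := by
  have himage : {pos ∈ range (k * 2 ^ c) | encA c k a pos = true} =
      (range k).image fun i => i * 2 ^ c + hatBlock c a i := by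
    ext pos
    simp only [mem_filter, mem_range, mem_image, encA_eq_true_iff, eq_comm (a := pos)]
    refine ⟨And.right, fun hpos => ⟨?_, hpos⟩⟩
    obtain ⟨i, hi, rfl⟩ := hpos
    exact mul_add_lt_mul hi (hatBlock_lt a i)
  rw [himage, card_image_of_injOn, card_range]
  exact fun i _ i' _ h => (mul_add_inj (hatBlock_lt a i) (hatBlock_lt a i') h).1

end Encodings

theorem sparseOV_reduction_correct_general (k c : ℕ)
    (a b : ℕ → Bool) :
    (ip (k * c) a b = 0 ↔ ip (k * 2 ^ c) (encA c k a) (encB c k b) = 0) ∧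
    ((Finset.range (k * 2 ^ c)).filter (fun pos => encA c k a pos = true)).card
      = k := by
  refine ⟨?_, card_filter_encA a⟩
  rw [ip_eq_zero_iff, forall_lt_mul_iff, ip_encA_eq_zero_iff]
  refine forall₂_congr fun i hi => ?_
  rw [← Bool.not_eq_true, encB_hatBlock_eq_true_iff a b hi]
  simp

/-- correctness of the reduction from Orthogonal Vectors to
one-sided sparse Orthogonal Vectors: for `d = k·c` and `d' = k·2^c`,
`⟨a, b⟩ = 0` iff `⟨φ_A(a), φ_B(b)⟩ = 0`, and `φ_A(a)` has exactly `k`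
nonzero entries. -/
theorem sparseOV_reduction_correct (k c : ℕ) (hk : 0 < k) (hc : 0 < c)
    (a b : ℕ → Bool) :
    (ip (k * c) a b = 0 ↔ ip (k * 2 ^ c) (encA c k a) (encB c k b) = 0) ∧
    ((Finset.range (k * 2 ^ c)).filter (fun pos => encA c k a pos = true)).card
      = k :=
  sparseOV_reduction_correct_general k c a b
end
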